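/- arXiv:1709.05846 — 7 statements merged into one kernel-verified Lean document; each statement's English description precedes it below -/
import Mathlib

section
/- Let p ≥ 1 and let Cl_p be the real Clifford algebra of the quadratic form Q(v) = -‖v‖² on EuclideanSpace ℝ (Fin p) with embedding ι. For every x ∈ EuclideanSpace ℝ (Fin p) with x ≠ 0, the Dirac derivative of the function v ↦ ‖v‖⁻¹ • ι(v) at x equals ((1 - p)/‖x‖) • 1; that is, Σ_{j=1}^{p} ι(e_j) * ∂_{x_j}(v ↦ ‖v‖⁻¹ • ι(v))(x) = ((1 - p)/‖x‖) • 1 in Cl_p. -/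
open MeasureTheory Metric
open scoped RealInnerProductSpace

noncomputable section

/-- Weak (Pettis-style) directional derivative: `f` has derivative `d` at `a` in direction `v`
iff every real-linear functional of `f` along the line `a + t • v` has derivative `ℓ d` at `t = 0`.
For finite-dimensional codomains this coincides with the usual directional derivative. -/
def HasPDeriv {E A : Type*} [NormedAddCommGroup E] [NormedSpace ℝ E]
    [AddCommGroup A] [Module ℝ A] (f : E → A) (a v : E) (d : A) : Prop :=
  ∀ ℓ : A →ₗ[ℝ] ℝ, HasDerivAt (fun t : ℝ => ℓ (f (a + t • v))) (ℓ d) 0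

/-- The Dirac derivative of `f` at `a` equals `D`: the partial derivatives of `f` at `a`
in the standard coordinate directions exist and `∑ⱼ ι(eⱼ) * ∂ⱼf(a) = D`. -/
def DiracDerivEq {m : ℕ} {Q : QuadraticForm ℝ (EuclideanSpace ℝ (Fin m))}
    (f : EuclideanSpace ℝ (Fin m) → CliffordAlgebra Q)
    (a : EuclideanSpace ℝ (Fin m)) (D : CliffordAlgebra Q) : Prop :=
  ∃ d : Fin m → CliffordAlgebra Q,
    (∀ j, HasPDeriv f a (EuclideanSpace.single j 1) (d j)) ∧
    ∑ j, CliffordAlgebra.ι Q (EuclideanSpace.single j 1) * d j = D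

/-! Along the line `x + t • v`, every real functional of `‖y‖⁻¹ • ι y` is the product of
`‖x + t • v‖⁻¹` and an affine function of `t`, so the `j`-th partial derivative at `x` is
`‖x‖⁻¹ • ι eⱼ - (xⱼ / ‖x‖ ^ 3) • ι x`. In the Dirac sum the first terms contribute
`∑ⱼ ι(eⱼ)² / ‖x‖ = -p / ‖x‖`, and the second `-(ι x)² / ‖x‖ ^ 3 = 1 / ‖x‖`,
because `∑ⱼ xⱼ • ι eⱼ = ι x`. -/

theorem hasDerivAt_norm_inv_add_smul {F : Type*} [NormedAddCommGroup F] [InnerProductSpace ℝ F]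
    {a : F} (v : F) (ha : a ≠ 0) :
    HasDerivAt (fun t : ℝ => ‖a + t • v‖⁻¹) (-(⟪a, v⟫ / ‖a‖ ^ 3)) 0 := by
  have hline : HasDerivAt (fun t : ℝ => a + t • v) v 0 := by
    simpa using ((hasDerivAt_id (0 : ℝ)).smul_const v).const_add a
  have hnorm := (hline.norm_sq.sqrt (by simpa using ha)).inv (by simpa using ha)
  simp only [Real.sqrt_sq (norm_nonneg _), zero_smul, add_zero] at hnorm
  refine hnorm.congr_deriv ?_
  have : ‖a‖ ≠ 0 := norm_ne_zero_iff.mpr ha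
  field_simp

theorem hasPDeriv_smul_linearMap {E A : Type*} [NormedAddCommGroup E] [NormedSpace ℝ E]
    [AddCommGroup A] [Module ℝ A] {g : E → ℝ} {a v : E} {g' : ℝ}
    (hg : HasDerivAt (fun t : ℝ => g (a + t • v)) g' 0) (L : E →ₗ[ℝ] A) :
    HasPDeriv (fun y => g y • L y) a v (g a • L v + g' • L a) := by
  intro ℓ
  have hlin : HasDerivAt (fun t : ℝ => ℓ (L a) + t * ℓ (L v)) (ℓ (L v)) 0 := by
    simpa using ((hasDerivAt_id (0 : ℝ)).mul_const (ℓ (L v))).const_add (ℓ (L a))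
  have hfun : (fun t : ℝ => ℓ (g (a + t • v) • L (a + t • v)))
      = fun t => g (a + t • v) * (ℓ (L a) + t * ℓ (L v)) := by
    funext t
    simp only [map_add, map_smul, smul_eq_mul]
  show HasDerivAt (fun t : ℝ => ℓ (g (a + t • v) • L (a + t • v))) _ 0
  rw [hfun]
  refine (hg.mul hlin).congr_deriv ?_
  simp
  ring

theorem sum_smul_ι_single {ι : Type*} [Fintype ι] [DecidableEq ι]
    (Q : QuadraticForm ℝ (EuclideanSpace ℝ ι)) (x : EuclideanSpace ℝ ι) :
    ∑ j, x j • CliffordAlgebra.ι Q (EuclideanSpace.single j 1) = CliffordAlgebra.ι Q x := by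
  simpa [map_sum] using congrArg (CliffordAlgebra.ι Q) ((EuclideanSpace.basisFun ι ℝ).sum_repr x)

theorem sum_ι_single_mul_self {ι : Type*} [Fintype ι] [DecidableEq ι]
    (Q : QuadraticForm ℝ (EuclideanSpace ℝ ι)) :
    ∑ j, CliffordAlgebra.ι Q (EuclideanSpace.single j 1) *
        CliffordAlgebra.ι Q (EuclideanSpace.single j 1) =
      algebraMap ℝ _ (∑ j, Q (EuclideanSpace.single j 1)) := by
  simp [CliffordAlgebra.ι_sq_scalar, map_sum]

theorem stmt0_general (p : ℕ)
    (Q : QuadraticForm ℝ (EuclideanSpace ℝ (Fin p)))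
    (hQ : ∀ v, Q v = -‖v‖ ^ 2)
    (x : EuclideanSpace ℝ (Fin p)) (hx : x ≠ 0) :
    DiracDerivEq (fun v => ‖v‖⁻¹ • CliffordAlgebra.ι Q v) x
      (((1 - (p : ℝ)) / ‖x‖) • 1) := by
  set e : Fin p → CliffordAlgebra Q := fun j => CliffordAlgebra.ι Q (EuclideanSpace.single j 1)
  refine ⟨fun j => ‖x‖⁻¹ • e j + (-(x j / ‖x‖ ^ 3)) • CliffordAlgebra.ι Q x, fun j => ?_, ?_⟩
  · simpa [EuclideanSpace.inner_single_right] using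
      hasPDeriv_smul_linearMap (g := fun y => ‖y‖⁻¹)
        (hasDerivAt_norm_inv_add_smul (EuclideanSpace.single j 1) hx) (CliffordAlgebra.ι Q)
  · calc ∑ j, e j * (‖x‖⁻¹ • e j + (-(x j / ‖x‖ ^ 3)) • CliffordAlgebra.ι Q x)
        = ‖x‖⁻¹ • ∑ j, e j * e j
            - (‖x‖ ^ 3)⁻¹ • ((∑ j, x j • e j) * CliffordAlgebra.ι Q x) := by
          simp only [mul_add, Finset.sum_add_distrib, Finset.smul_sum, Finset.sum_mul,
            mul_smul_comm, smul_mul_assoc, smul_smul, neg_smul, div_eq_mul_inv]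
          simp [sub_eq_add_neg, mul_comm]
      _ = ‖x‖⁻¹ • algebraMap ℝ _ (-(p : ℝ)) - (‖x‖ ^ 3)⁻¹ • algebraMap ℝ _ (-‖x‖ ^ 2) := by
          rw [sum_ι_single_mul_self, sum_smul_ι_single, CliffordAlgebra.ι_sq_scalar]
          simp [hQ]
      _ = ((1 - (p : ℝ)) / ‖x‖) • 1 := by
          simp only [Algebra.algebraMap_eq_smul_one, smul_smul, ← sub_smul]
          congr 1
          field_simp
          ring

theorem stmt0 (p : ℕ) (hp : 1 ≤ p)
    (Q : QuadraticForm ℝ (EuclideanSpace ℝ (Fin p)))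
    (hQ : ∀ v, Q v = -‖v‖ ^ 2)
    (x : EuclideanSpace ℝ (Fin p)) (hx : x ≠ 0) :
    DiracDerivEq (fun v => ‖v‖⁻¹ • CliffordAlgebra.ι Q v) x
      (((1 - (p : ℝ)) / ‖x‖) • 1) :=
  stmt0_general p Q hQ x hx
end
end

section
/- Let p ≥ 1, let Cl_p be the real Clifford algebra of Q(v) = -‖v‖² on EuclideanSpace ℝ (Fin p) with embedding ι, and let j ≥ 1 be a natural number. Then for every x ∈ EuclideanSpace ℝ (Fin p), the Dirac derivative of the function v ↦ (ι(v))^j at x equals β_j • (ι(x))^{j-1}, where β_j = -j if j is even and β_j = -(j + p - 1) if j is odd. -/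
open MeasureTheory Metric
open scoped RealInnerProductSpace

noncomputable section

/-! Along the line `x + t eₖ` the derivative of `ι(v)ʲ` is `∑_{i<j} ι(x)ⁱ ι(eₖ) ι(x)^{j-1-i}`, so
the Dirac derivative is `∑_{i<j} (∑ₖ ι(eₖ) ι(x)ⁱ ι(eₖ)) ι(x)^{j-1-i}`. Even powers of `ι(x)` are
scalars, so for even `i` the inner sum is `∑ₖ Q(eₖ) ι(x)ⁱ = -p ι(x)ⁱ`; for odd `i` it reduces to
`∑ₖ ι(eₖ) ι(x) ι(eₖ) = ι(∑ₖ (polar Q eₖ x) eₖ - Q(eₖ) x) = (p - 2) ι(x)`. Summing the alternating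
coefficients `-p, p - 2, -p, …` over `i < j` gives `β_j`. -/

open Finset CliffordAlgebra

theorem sum_range_succ_pow_mul_mul_pow {A : Type*} [Ring A] (a b : A) (n : ℕ) :
    ∑ i ∈ range (n + 1), a ^ i * b * a ^ (n - i) =
      (∑ i ∈ range n, a ^ i * b * a ^ (n - 1 - i)) * a + a ^ n * b := by
  rw [sum_mul, sum_range_succ, Nat.sub_self, pow_zero, mul_one]
  congr 1
  refine sum_congr rfl fun i hi => ?_
  have hi : i < n := mem_range.mp hi
  rw [mul_assoc _ _ a, ← pow_succ, show n - 1 - i + 1 = n - i by omega]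

theorem hasDerivAt_map_add_smul_pow {A : Type*} [Ring A] [Algebra ℝ A] (a b : A) (n : ℕ)
    (ℓ : A →ₗ[ℝ] ℝ) :
    HasDerivAt (fun t : ℝ => ℓ ((a + t • b) ^ n))
      (ℓ (∑ i ∈ range n, a ^ i * b * a ^ (n - 1 - i))) 0 := by
  induction n generalizing ℓ with
  | zero => simpa using hasDerivAt_const (0 : ℝ) (ℓ 1)
  | succ n ih =>
    have hpow : ∀ t : ℝ, ℓ ((a + t • b) ^ (n + 1)) =
        (ℓ ∘ₗ LinearMap.mulRight ℝ a) ((a + t • b) ^ n) +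
          t * (ℓ ∘ₗ LinearMap.mulRight ℝ b) ((a + t • b) ^ n) := fun t => by
      simp [pow_succ, mul_add]
    have h : HasDerivAt (fun t : ℝ => (ℓ ∘ₗ LinearMap.mulRight ℝ a) ((a + t • b) ^ n) +
        t * (ℓ ∘ₗ LinearMap.mulRight ℝ b) ((a + t • b) ^ n)) _ 0 :=
      (ih _).add ((hasDerivAt_id' 0).mul (ih _))
    simp only [hpow]
    convert h using 1
    rw [Nat.add_sub_cancel, sum_range_succ_pow_mul_mul_pow]
    simp only [map_add, LinearMap.comp_apply, LinearMap.mulRight_apply, zero_smul, add_zero,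
      one_mul, zero_mul]

theorem hasPDeriv_ι_pow {E : Type*} [NormedAddCommGroup E] [NormedSpace ℝ E]
    (Q : QuadraticForm ℝ E) (n : ℕ) (x v : E) :
    HasPDeriv (fun w => ι Q w ^ n) x v
      (∑ i ∈ range n, ι Q x ^ i * ι Q v * ι Q x ^ (n - 1 - i)) := fun ℓ => by
  simpa only [map_add, map_smul] using hasDerivAt_map_add_smul_pow (ι Q x) (ι Q v) n ℓ

section Clifford

variable {R M : Type*} [CommRing R] [AddCommGroup M] [Module R M] (Q : QuadraticForm R M)

theorem ι_pow_two_mul (x : M) (m : ℕ) : ι Q x ^ (2 * m) = algebraMap R _ (Q x ^ m) := by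
  rw [pow_mul, sq, ι_sq_scalar, map_pow]

theorem ι_mul_ι_pow_mul_ι_of_even (e x : M) {i : ℕ} (hi : Even i) :
    ι Q e * ι Q x ^ i * ι Q e = Q e • ι Q x ^ i := by
  obtain ⟨m, rfl⟩ := even_iff_two_dvd.mp hi
  rw [ι_pow_two_mul, ← Algebra.commutes, mul_assoc, ι_sq_scalar, ← map_mul, Algebra.smul_def,
    ← map_mul, mul_comm]

end Clifford

theorem sum_range_ite_even (r : ℝ) (n : ℕ) :
    ∑ i ∈ range n, (if Even i then -r else r - 2) =
      if Even n then -(n : ℝ) else -((n : ℝ) + r - 1) := by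
  induction n with
  | zero => simp
  | succ n ih =>
    rw [sum_range_succ, ih]
    by_cases hn : Even n <;>
      simp only [hn, Nat.even_add_one, not_true_eq_false, not_false_eq_true, ↓reduceIte,
        Nat.cast_add, Nat.cast_one] <;> ring

section Euclidean

variable {E κ : Type*} [NormedAddCommGroup E] [InnerProductSpace ℝ E] [Fintype κ]
  {Q : QuadraticForm ℝ E}

theorem polar_eq_neg_two_mul_inner (hQ : ∀ v, Q v = -‖v‖ ^ 2) (x y : E) :
    QuadraticMap.polar Q x y = -2 * ⟪x, y⟫ := by
  rw [QuadraticMap.polar, hQ, hQ, hQ, norm_add_sq_real]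
  ring

theorem sum_ι_mul_ι_mul_ι (hQ : ∀ v, Q v = -‖v‖ ^ 2) (b : OrthonormalBasis κ ℝ E) (x : E) :
    ∑ k, ι Q (b k) * ι Q x * ι Q (b k) = ((Fintype.card κ : ℝ) - 2) • ι Q x := by
  have hsum : ∑ k, (QuadraticMap.polar Q (b k) x • b k - Q (b k) • x) =
      ((Fintype.card κ : ℝ) - 2) • x := by
    simp_rw [polar_eq_neg_two_mul_inner hQ, hQ, b.norm_eq_one, sum_sub_distrib, mul_smul,
      ← smul_sum, b.sum_repr', sum_const, card_univ]
    module
  simp_rw [ι_mul_ι_mul_ι, ← map_sum, hsum, map_smul]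

theorem sum_ι_mul_ι_pow_mul_ι (hQ : ∀ v, Q v = -‖v‖ ^ 2) (b : OrthonormalBasis κ ℝ E) (x : E)
    (i : ℕ) :
    ∑ k, ι Q (b k) * ι Q x ^ i * ι Q (b k) =
      (if Even i then -(Fintype.card κ : ℝ) else (Fintype.card κ : ℝ) - 2) • ι Q x ^ i := by
  split_ifs with hi
  · simp_rw [ι_mul_ι_pow_mul_ι_of_even Q _ x hi, hQ, b.norm_eq_one, sum_const, card_univ]
    module
  · obtain ⟨m, rfl⟩ := Nat.not_even_iff_odd.mp hi
    simp_rw [pow_succ, ι_pow_two_mul, ← Algebra.smul_def, mul_smul_comm, smul_mul_assoc]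
    rw [← smul_sum, sum_ι_mul_ι_mul_ι hQ b, smul_comm]

theorem sum_ι_mul_sum_pow_mul_ι_mul_pow (hQ : ∀ v, Q v = -‖v‖ ^ 2)
    (b : OrthonormalBasis κ ℝ E) (x : E) (n : ℕ) :
    ∑ k, ι Q (b k) * ∑ i ∈ range n, ι Q x ^ i * ι Q (b k) * ι Q x ^ (n - 1 - i) =
      (if Even n then -(n : ℝ) else -((n : ℝ) + Fintype.card κ - 1)) • ι Q x ^ (n - 1) := calc
  _ = ∑ i ∈ range n, (∑ k, ι Q (b k) * ι Q x ^ i * ι Q (b k)) * ι Q x ^ (n - 1 - i) := by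
    simp_rw [mul_sum, sum_mul, mul_assoc]
    exact sum_comm
  _ = ∑ i ∈ range n, (if Even i then -(Fintype.card κ : ℝ) else (Fintype.card κ : ℝ) - 2) •
        ι Q x ^ (n - 1) := by
    refine sum_congr rfl fun i hi => ?_
    rw [sum_ι_mul_ι_pow_mul_ι hQ b, smul_mul_assoc, ← pow_add,
      Nat.add_sub_cancel' (by have := mem_range.mp hi; omega)]
  _ = _ := by rw [← sum_smul, sum_range_ite_even]

end Euclidean

theorem stmt1_general (p : ℕ)
    (Q : QuadraticForm ℝ (EuclideanSpace ℝ (Fin p)))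
    (hQ : ∀ v, Q v = -‖v‖ ^ 2)
    (j : ℕ)
    (x : EuclideanSpace ℝ (Fin p)) :
    DiracDerivEq (fun v => CliffordAlgebra.ι Q v ^ j) x
      ((if Even j then -(j : ℝ) else -((j : ℝ) + p - 1)) •
        CliffordAlgebra.ι Q x ^ (j - 1)) := by
  refine ⟨_, fun k => hasPDeriv_ι_pow Q j x _, ?_⟩
  simpa [EuclideanSpace.basisFun_apply] using
    sum_ι_mul_sum_pow_mul_ι_mul_pow hQ (EuclideanSpace.basisFun (Fin p) ℝ) x j

theorem stmt1 (p : ℕ) (hp : 1 ≤ p)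
    (Q : QuadraticForm ℝ (EuclideanSpace ℝ (Fin p)))
    (hQ : ∀ v, Q v = -‖v‖ ^ 2)
    (j : ℕ) (hj : 1 ≤ j)
    (x : EuclideanSpace ℝ (Fin p)) :
    DiracDerivEq (fun v => CliffordAlgebra.ι Q v ^ j) x
      ((if Even j then -(j : ℝ) else -((j : ℝ) + p - 1)) •
        CliffordAlgebra.ι Q x ^ (j - 1)) :=
  stmt1_general p Q hQ j x
end
end

section
/- Let p, q ≥ 1 and let Cl_{p+q} be the real Clifford algebra of Q(v) = -‖v‖² on EuclideanSpace ℝ (Fin (p+q)) with embedding ι. Write points of ℝ^{p+q} as (x,y) with x the first p coordinates and y the last q coordinates, and let 𝒜 be the subalgebra of Cl_{p+q} generated by the images ι(ε_1),…,ι(ε_q) of the last q standard basis vectors. Let A, B : (0,∞) × EuclideanSpace ℝ (Fin q) → Cl_{p+q} be differentiable functions taking values in 𝒜, and define f on {(x,y) : x ≠ 0} by f(x,y) = A(‖x‖, y) + ‖x‖⁻¹ • (ι(x̃) * B(‖x‖, y)), where x̃ is x regarded as a vector of ℝ^{p+q} supported in the first p coordinates. Then f is monogenic on {x ≠ 0}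 (i.e. (∂_x + ∂_y)f = 0 there) if and only if for all r > 0 and all y: ∂_y A(r,y) - ∂_r B(r,y) - ((p-1)/r) • B(r,y) = 0 and ∂_y B(r,y) - ∂_r A(r,y) = 0, where ∂_r is the partial derivative in the first (radial) variable and ∂_y g = Σ_{j=1}^q ι(ε_j) * (∂_{y_j} g). -/
open MeasureTheory Metric
open scoped RealInnerProductSpace

noncomputable section

variable (p q : ℕ) in
/-- The first `p` coordinates of a point of `ℝ^{p+q}`. -/
def xpart (z : EuclideanSpace ℝ (Fin (p + q))) : EuclideanSpace ℝ (Fin p) :=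
  (WithLp.equiv 2 (Fin p → ℝ)).symm fun i => z (Fin.castAdd q i)

variable (p q : ℕ) in
/-- The last `q` coordinates of a point of `ℝ^{p+q}`. -/
def ypart (z : EuclideanSpace ℝ (Fin (p + q))) : EuclideanSpace ℝ (Fin q) :=
  (WithLp.equiv 2 (Fin q → ℝ)).symm fun i => z (Fin.natAdd p i)

variable (p q : ℕ) in
/-- A vector of `ℝ^p` regarded as a vector of `ℝ^{p+q}` supported in the first `p` coordinates. -/
def embX (x : EuclideanSpace ℝ (Fin p)) : EuclideanSpace ℝ (Fin (p + q)) :=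
  (WithLp.equiv 2 (Fin (p + q) → ℝ)).symm (Fin.addCases (fun i => x i) fun _ => 0)

variable (p q : ℕ) in
/-- A vector of `ℝ^q` regarded as a vector of `ℝ^{p+q}` supported in the last `q` coordinates. -/
def embY (y : EuclideanSpace ℝ (Fin q)) : EuclideanSpace ℝ (Fin (p + q)) :=
  (WithLp.equiv 2 (Fin (p + q) → ℝ)).symm (Fin.addCases (fun _ => 0) fun i => y i)


/-! Along a line `z + t • v` the ansatz is `A(ρ, Y) + ρ⁻¹ ι(x + t vₓ) B(ρ, Y)` with
`ρ = ‖x + t vₓ‖`, so the chain rule gives all its partial derivatives. Summing them against the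
generators, with `ι(eᵢ)² = -1`, `ι(x)² = -‖x‖²` and the anticommutation of `ι(x)` with the
generators of `𝒜`, turns the Dirac derivative into `U - ι(x) (‖x‖⁻¹ V)`, where `U = 0` and `V = 0`
are the two equations of the system. Both `U` and `V` lie in `𝒜`, and the automorphism of the
Clifford algebra induced by the reflection negating the `x`-coordinates fixes `𝒜` and negates
`ι(x)`; applying it shows that `U - ι(x) W = 0` with `U, W ∈ 𝒜` forces `U = W = 0`. -/

section Coordinates

variable {p q : ℕ}

lemma Fin.castAdd_ne_natAdd (i : Fin p) (j : Fin q) : Fin.castAdd q i ≠ Fin.natAdd p j := by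
  simp only [ne_eq, Fin.ext_iff, Fin.val_castAdd, Fin.val_natAdd]
  omega

@[simp] lemma xpart_apply (z : EuclideanSpace ℝ (Fin (p + q))) (i : Fin p) :
    xpart p q z i = z (Fin.castAdd q i) := rfl

@[simp] lemma ypart_apply (z : EuclideanSpace ℝ (Fin (p + q))) (j : Fin q) :
    ypart p q z j = z (Fin.natAdd p j) := rfl

@[simp] lemma embX_castAdd (x : EuclideanSpace ℝ (Fin p)) (i : Fin p) :
    embX p q x (Fin.castAdd q i) = x i := by
  simp [embX]

@[simp] lemma embX_natAdd (x : EuclideanSpace ℝ (Fin p)) (j : Fin q) :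
    embX p q x (Fin.natAdd p j) = 0 := by
  simp [embX]

@[simp] lemma embY_castAdd (y : EuclideanSpace ℝ (Fin q)) (i : Fin p) :
    embY p q y (Fin.castAdd q i) = 0 := by
  simp [embY]

@[simp] lemma embY_natAdd (y : EuclideanSpace ℝ (Fin q)) (j : Fin q) :
    embY p q y (Fin.natAdd p j) = y j := by
  simp [embY]

lemma xpart_add_smul (z v : EuclideanSpace ℝ (Fin (p + q))) (t : ℝ) :
    xpart p q (z + t • v) = xpart p q z + t • xpart p q v := rfl

lemma ypart_add_smul (z v : EuclideanSpace ℝ (Fin (p + q))) (t : ℝ) :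
    ypart p q (z + t • v) = ypart p q z + t • ypart p q v := rfl

lemma embX_add_smul (x x' : EuclideanSpace ℝ (Fin p)) (t : ℝ) :
    embX p q (x + t • x') = embX p q x + t • embX p q x' := by
  ext k
  induction k using Fin.addCases <;> simp

@[simp] lemma xpart_embX_add_embY (x : EuclideanSpace ℝ (Fin p)) (y : EuclideanSpace ℝ (Fin q)) :
    xpart p q (embX p q x + embY p q y) = x := by
  ext i; simp

@[simp] lemma ypart_embX_add_embY (x : EuclideanSpace ℝ (Fin p)) (y : EuclideanSpace ℝ (Fin q)) :
    ypart p q (embX p q x + embY p q y) = y := by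
  ext j; simp

@[simp] lemma xpart_single_castAdd (i : Fin p) :
    xpart p q (EuclideanSpace.single (Fin.castAdd q i) 1) = EuclideanSpace.single i 1 := by
  ext i'
  simp [(Fin.castAdd_injective p q).eq_iff]

@[simp] lemma ypart_single_castAdd (i : Fin p) :
    ypart p q (EuclideanSpace.single (Fin.castAdd q i) 1) = 0 := by
  ext j
  simp [(Fin.castAdd_ne_natAdd i j).symm]

@[simp] lemma xpart_single_natAdd (j : Fin q) :
    xpart p q (EuclideanSpace.single (Fin.natAdd p j) 1) = 0 := by
  ext i
  simp [Fin.castAdd_ne_natAdd i j]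

@[simp] lemma ypart_single_natAdd (j : Fin q) :
    ypart p q (EuclideanSpace.single (Fin.natAdd p j) 1) = EuclideanSpace.single j 1 := by
  ext j'
  simp

@[simp] lemma embX_zero : embX p q (0 : EuclideanSpace ℝ (Fin p)) = 0 := by
  ext k
  induction k using Fin.addCases <;> simp

lemma embX_single (i : Fin p) :
    embX p q (EuclideanSpace.single i 1) = EuclideanSpace.single (Fin.castAdd q i) 1 := by
  ext k
  induction k using Fin.addCases with
  | left i' => simp [(Fin.castAdd_injective p q).eq_iff]
  | right j => simp [(Fin.castAdd_ne_natAdd i j).symm]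

lemma embX_eq_sum (x : EuclideanSpace ℝ (Fin p)) :
    embX p q x = ∑ i, x i • EuclideanSpace.single (Fin.castAdd q i) 1 := by
  ext k
  induction k using Fin.addCases with
  | left i => simp [Pi.single_apply, (Fin.castAdd_injective p q).eq_iff]
  | right j => simp [Fin.castAdd_ne_natAdd _ j]

lemma norm_embX (x : EuclideanSpace ℝ (Fin p)) : ‖embX p q x‖ = ‖x‖ := by
  simp [EuclideanSpace.norm_eq, Fin.sum_univ_add]

lemma inner_single_natAdd_embX (j : Fin q) (x : EuclideanSpace ℝ (Fin p)) :
    ⟪EuclideanSpace.single (Fin.natAdd p j) 1, embX p q x⟫ = 0 := by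
  simp [EuclideanSpace.inner_single_left]

end Coordinates

section Clifford

variable {E : Type*} [NormedAddCommGroup E] [InnerProductSpace ℝ E] {Q : QuadraticForm ℝ E}

lemma QuadraticMap.isOrtho_of_inner_eq_zero (hQ : ∀ v, Q v = -‖v‖ ^ 2) {u v : E}
    (h : ⟪u, v⟫ = 0) : Q.IsOrtho u v := by
  rw [QuadraticMap.isOrtho_def, hQ, hQ, hQ, norm_add_sq_real, h]
  ring

lemma CliffordAlgebra.exists_algHom_ι_eq_ι_reflection (hQ : ∀ v, Q v = -‖v‖ ^ 2)
    (K : Submodule ℝ E) [K.HasOrthogonalProjection] :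
    ∃ α : CliffordAlgebra Q →ₐ[ℝ] CliffordAlgebra Q, ∀ v, α (ι Q v) = ι Q (K.reflection v) :=
  ⟨map ⟨K.reflection.toLinearMap, fun v => by simp [hQ]⟩, fun _ => map_apply_ι _ _⟩

end Clifford

lemma sub_mul_eq_zero_iff_of_algHom {R : Type*} [Ring R] [Algebra ℝ R] (α : R →ₐ[ℝ] R)
    {u v m : R} {c : ℝ} (hu : α u = u) (hv : α v = v) (hm : α m = -m)
    (hmm : m * m = algebraMap ℝ R c) (hc : c ≠ 0) : u - m * v = 0 ↔ u = 0 ∧ v = 0 := by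
  refine ⟨fun h => ?_, fun ⟨hu0, hv0⟩ => by rw [hu0, hv0, mul_zero, sub_zero]⟩
  have hα : u + m * v = 0 := by simpa [hu, hv, hm] using congrArg α h
  have hu0 : u = 0 := by
    have : (2 : ℝ) • u = 0 := by rw [two_smul]; simpa using congrArg₂ (· + ·) h hα
    exact (smul_eq_zero.mp this).resolve_left two_ne_zero
  have hmv : m * v = 0 := by simpa [hu0] using hα
  refine ⟨hu0, (smul_eq_zero.mp ?_).resolve_left hc⟩
  rw [Algebra.smul_def, ← hmm, mul_assoc, hmv, mul_zero]

section YAlgebra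

variable {p q : ℕ} {Q : QuadraticForm ℝ (EuclideanSpace ℝ (Fin (p + q)))}

variable (p q Q) in
def yAlg : Subalgebra ℝ (CliffordAlgebra Q) :=
  Algebra.adjoin ℝ (Set.range fun j : Fin q =>
    CliffordAlgebra.ι Q (EuclideanSpace.single (Fin.natAdd p j) (1 : ℝ)))

lemma sub_ι_embX_mul_eq_zero_iff (hQ : ∀ v, Q v = -‖v‖ ^ 2) {x : EuclideanSpace ℝ (Fin p)}
    (hx : x ≠ 0) {u v : CliffordAlgebra Q} (hu : u ∈ yAlg p q Q) (hv : v ∈ yAlg p q Q) :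
    u - CliffordAlgebra.ι Q (embX p q x) * v = 0 ↔ u = 0 ∧ v = 0 := by
  let K : Submodule ℝ (EuclideanSpace ℝ (Fin (p + q))) :=
    Submodule.span ℝ (Set.range fun j : Fin q => EuclideanSpace.single (Fin.natAdd p j) 1)
  obtain ⟨α, hα⟩ := CliffordAlgebra.exists_algHom_ι_eq_ι_reflection hQ K
  have hfix : ∀ w ∈ yAlg p q Q, α w = w := fun w hw =>
    AlgHom.adjoin_le_equalizer α (AlgHom.id ℝ _) (by
      rintro _ ⟨j, rfl⟩
      rw [hα, K.reflection_mem_subspace_eq_self (Submodule.subset_span ⟨j, rfl⟩)]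
      rfl) hw
  have hxK : embX p q x ∈ Kᗮ := by
    have hxy : Submodule.span ℝ (Set.range fun i : Fin p =>
        EuclideanSpace.single (Fin.castAdd q i) (1 : ℝ)) ⟂ K :=
      Submodule.isOrtho_span.mpr <| by
        rintro _ ⟨i, rfl⟩ _ ⟨j, rfl⟩
        simp [EuclideanSpace.inner_single_left, Fin.castAdd_ne_natAdd]
    refine Submodule.isOrtho_iff_le.mp hxy ?_
    rw [embX_eq_sum]
    exact Submodule.sum_mem _ fun i _ => Submodule.smul_mem _ _ (Submodule.subset_span ⟨i, rfl⟩)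
  refine sub_mul_eq_zero_iff_of_algHom α (hfix u hu) (hfix v hv) ?_
    (CliffordAlgebra.ι_sq_scalar Q _) ?_
  · rw [hα, K.reflection_mem_subspace_orthogonalComplement_eq_neg hxK, map_neg]
  · simpa [hQ, norm_embX] using hx

end YAlgebra

section WeakDerivative

variable {M : Type*} [AddCommGroup M] [Module ℝ M]

def WeakHasDerivAt (γ : ℝ → M) (d : M) (t : ℝ) : Prop :=
  ∀ ℓ : M →ₗ[ℝ] ℝ, HasDerivAt (fun s => ℓ (γ s)) (ℓ d) t

lemma hasPDeriv_iff_weakHasDerivAt {E : Type*} [NormedAddCommGroup E] [NormedSpace ℝ E]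
    {f : E → M} {a v : E} {d : M} :
    HasPDeriv f a v d ↔ WeakHasDerivAt (fun t => f (a + t • v)) d 0 := Iff.rfl

variable {γ δ : ℝ → M} {d e : M} {t : ℝ}

lemma WeakHasDerivAt.add (hγ : WeakHasDerivAt γ d t) (hδ : WeakHasDerivAt δ e t) :
    WeakHasDerivAt (fun s => γ s + δ s) (d + e) t := fun ℓ => by
  simpa only [map_add] using (hγ ℓ).fun_add (hδ ℓ)

lemma WeakHasDerivAt.smul {c : ℝ → ℝ} {c' : ℝ} (hc : HasDerivAt c c' t)
    (hγ : WeakHasDerivAt γ d t) :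
    WeakHasDerivAt (fun s => c s • γ s) (c t • d + c' • γ t) t := fun ℓ => by
  simpa only [map_add, map_smul, smul_eq_mul, add_comm, mul_comm c'] using hc.fun_mul (hγ ℓ)

lemma WeakHasDerivAt.map {N : Type*} [AddCommGroup N] [Module ℝ N] (L : M →ₗ[ℝ] N)
    (hγ : WeakHasDerivAt γ d t) : WeakHasDerivAt (fun s => L (γ s)) (L d) t :=
  fun ℓ => hγ (ℓ ∘ₗ L)

variable {E : Type*} [NormedAddCommGroup E] [NormedSpace ℝ E] {f : E → M} {a v : E}

lemma HasPDeriv.unique {d₁ d₂ : M} (h₁ : HasPDeriv f a v d₁) (h₂ : HasPDeriv f a v d₂) :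
    d₁ = d₂ := by
  rw [← sub_eq_zero, ← Module.forall_dual_apply_eq_zero_iff ℝ (d₁ - d₂)]
  intro ℓ
  rw [map_sub, (h₁ ℓ).unique (h₂ ℓ), sub_self]

/-- A functional vanishing on `S` but not at `d` would see a nonzero derivative of a locally zero
function. -/
lemma HasPDeriv.mem {d : M} (S : Submodule ℝ M) (hd : HasPDeriv f a v d)
    (hf : ∀ᶠ t : ℝ in nhds 0, f (a + t • v) ∈ S) : d ∈ S := by
  by_contra hdS
  obtain ⟨φ, hφ⟩ : ∃ φ : Module.Dual ℝ (M ⧸ S), φ (S.mkQ d) ≠ 0 := by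
    by_contra! h
    exact hdS ((Submodule.Quotient.mk_eq_zero S).mp
      ((Module.forall_dual_apply_eq_zero_iff ℝ _).mp h))
  have hzero : (fun t : ℝ => (φ ∘ₗ S.mkQ) (f (a + t • v))) =ᶠ[nhds 0] fun _ => 0 :=
    hf.mono fun t ht => by simp [(Submodule.Quotient.mk_eq_zero S).mpr ht]
  exact hφ (((hd (φ ∘ₗ S.mkQ)).congr_of_eventuallyEq hzero.symm).unique (hasDerivAt_const 0 0))

end WeakDerivative

lemma DiracDerivEq.iff_eq {m : ℕ} {Q : QuadraticForm ℝ (EuclideanSpace ℝ (Fin m))}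
    {f : EuclideanSpace ℝ (Fin m) → CliffordAlgebra Q} {a : EuclideanSpace ℝ (Fin m)}
    {D D' : CliffordAlgebra Q} (hD : DiracDerivEq f a D) : DiracDerivEq f a D' ↔ D = D' := by
  refine ⟨fun hD' => ?_, fun h => h ▸ hD⟩
  obtain ⟨d, hd, rfl⟩ := hD
  obtain ⟨d', hd', rfl⟩ := hD'
  simp_rw [fun j => (hd j).unique (hd' j)]

lemma HasFDerivAt.apply_eq_of_hasLineDerivAt {n : ℕ} {g : ℝ × EuclideanSpace ℝ (Fin n) → ℝ}
    {L : ℝ × EuclideanSpace ℝ (Fin n) →L[ℝ] ℝ} {w : ℝ × EuclideanSpace ℝ (Fin n)} {gr : ℝ}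
    {gy : Fin n → ℝ} (hL : HasFDerivAt g L w) (hr : HasLineDerivAt ℝ g gr w (1, 0))
    (hy : ∀ j, HasLineDerivAt ℝ g (gy j) w (0, EuclideanSpace.single j 1))
    (u : ℝ × EuclideanSpace ℝ (Fin n)) :
    L u = u.1 * gr + ∑ j, u.2 j * gy j := by
  have hu : u = u.1 • (1, 0) + ∑ j, u.2 j • (0, EuclideanSpace.single j 1) := by
    refine Prod.ext (by simp [Prod.fst_sum]) ?_
    simpa [Prod.snd_sum] using ((EuclideanSpace.basisFun (Fin n) ℝ).sum_repr u.2).symm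
  conv_lhs => rw [hu]
  simp only [map_add, map_smul, map_sum, smul_eq_mul, (hL.hasLineDerivAt _).unique hr,
    fun j => (hL.hasLineDerivAt _).unique (hy j)]

section RadialPartials

variable {q : ℕ} {M : Type*} [AddCommGroup M] [Module ℝ M]

structure HasRadialPartials (G Gr : ℝ → EuclideanSpace ℝ (Fin q) → M)
    (Gy : ℝ → EuclideanSpace ℝ (Fin q) → Fin q → M) : Prop where
  differentiableOn : ∀ ℓ : M →ₗ[ℝ] ℝ, DifferentiableOn ℝ
    (fun w : ℝ × EuclideanSpace ℝ (Fin q) => ℓ (G w.1 w.2)) {w | 0 < w.1}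
  radial : ∀ r, 0 < r → ∀ y, HasPDeriv
    (fun w : ℝ × EuclideanSpace ℝ (Fin q) => G w.1 w.2) (r, y) (1, 0) (Gr r y)
  coord : ∀ r, 0 < r → ∀ y j, HasPDeriv
    (fun w : ℝ × EuclideanSpace ℝ (Fin q) => G w.1 w.2) (r, y)
    (0, EuclideanSpace.single j 1) (Gy r y j)

variable {G Gr : ℝ → EuclideanSpace ℝ (Fin q) → M} {Gy : ℝ → EuclideanSpace ℝ (Fin q) → Fin q → M}

lemma HasRadialPartials.weakHasDerivAt (hG : HasRadialPartials G Gr Gy) {ρ : ℝ → ℝ}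
    {Y : ℝ → EuclideanSpace ℝ (Fin q)} {ρ' t : ℝ} {vy : EuclideanSpace ℝ (Fin q)}
    (hρ : HasDerivAt ρ ρ' t) (hρt : 0 < ρ t) (hY : HasDerivAt Y vy t) :
    WeakHasDerivAt (fun s => G (ρ s) (Y s))
      (ρ' • Gr (ρ t) (Y t) + ∑ j, vy j • Gy (ρ t) (Y t) j) t := fun ℓ => by
  have hopen : IsOpen {w : ℝ × EuclideanSpace ℝ (Fin q) | 0 < w.1} :=
    isOpen_lt continuous_const continuous_fst
  have hL := ((hG.differentiableOn ℓ).differentiableAt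
    (hopen.mem_nhds (show 0 < (ρ t, Y t).1 from hρt))).hasFDerivAt
  have := hL.comp_hasDerivAt t (hρ.prodMk hY)
  rw [hL.apply_eq_of_hasLineDerivAt (hG.radial _ hρt _ ℓ) (fun j => hG.coord _ hρt _ j ℓ)]
    at this
  simpa [Function.comp_def] using this

lemma HasRadialPartials.radial_mem (hG : HasRadialPartials G Gr Gy) (S : Submodule ℝ M)
    (hS : ∀ r, 0 < r → ∀ y, G r y ∈ S) {r : ℝ} (hr : 0 < r) (y : EuclideanSpace ℝ (Fin q)) :
    Gr r y ∈ S := by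
  refine (hG.radial r hr y).mem S ?_
  filter_upwards [Ioi_mem_nhds (neg_neg_of_pos hr)] with t ht
  exact hS _ (by simpa [neg_lt_iff_pos_add'] using ht) _

lemma HasRadialPartials.coord_mem (hG : HasRadialPartials G Gr Gy) (S : Submodule ℝ M)
    (hS : ∀ r, 0 < r → ∀ y, G r y ∈ S) {r : ℝ} (hr : 0 < r) (y : EuclideanSpace ℝ (Fin q))
    (j : Fin q) : Gy r y j ∈ S :=
  (hG.coord r hr y j).mem S (.of_forall fun t => by simpa using hS r hr _)

end RadialPartials

lemma HasDerivAt.norm {E : Type*} [NormedAddCommGroup E] [InnerProductSpace ℝ E] {f : ℝ → E}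
    {f' : E} {t : ℝ} (hf : HasDerivAt f f' t) (h0 : f t ≠ 0) :
    HasDerivAt (fun s => ‖f s‖) (⟪f t, f'⟫ / ‖f t‖) t := by
  have h := hf.norm_sq.sqrt (by simpa using h0)
  simp only [Real.sqrt_sq (norm_nonneg _)] at h
  convert h using 1
  field_simp

section Ansatz

variable {p q : ℕ} {Q : QuadraticForm ℝ (EuclideanSpace ℝ (Fin (p + q)))}

local notation "ι" => CliffordAlgebra.ι Q

def axialAnsatz (A B : ℝ → EuclideanSpace ℝ (Fin q) → CliffordAlgebra Q)
    (z : EuclideanSpace ℝ (Fin (p + q))) : CliffordAlgebra Q :=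
  A ‖xpart p q z‖ (ypart p q z) +
    ‖xpart p q z‖⁻¹ • (ι (embX p q (xpart p q z)) * B ‖xpart p q z‖ (ypart p q z))

def yDirac (F : Fin q → CliffordAlgebra Q) : CliffordAlgebra Q :=
  ∑ j, ι (EuclideanSpace.single (Fin.natAdd p j) (1 : ℝ)) * F j

/-- The directional derivative of `axialAnsatz A B` at a point with `x`-part `x`, in terms of the
values `b`, `Ar`, `Br`, `Ay`, `By` of `B` and of the partial derivatives there; the coefficient of
`⟪x, xpart v⟫` collects every term coming from the derivative `⟪x, xpart v⟫ / ‖x‖` of `‖x‖`. -/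
def ansatzDeriv (x : EuclideanSpace ℝ (Fin p)) (b Ar Br : CliffordAlgebra Q)
    (Ay By : Fin q → CliffordAlgebra Q) (v : EuclideanSpace ℝ (Fin (p + q))) :
    CliffordAlgebra Q :=
  ⟪x, xpart p q v⟫ • (‖x‖⁻¹ • Ar + ι (embX p q x) * ((‖x‖ ^ 2)⁻¹ • Br - (‖x‖ ^ 3)⁻¹ • b))
    + ∑ j, ypart p q v j • Ay j + ‖x‖⁻¹ • (ι (embX p q x) * ∑ j, ypart p q v j • By j)
    + ι (embX p q (xpart p q v)) * (‖x‖⁻¹ • b)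

variable {A B Ar Br : ℝ → EuclideanSpace ℝ (Fin q) → CliffordAlgebra Q}
  {Ay By : ℝ → EuclideanSpace ℝ (Fin q) → Fin q → CliffordAlgebra Q}

lemma hasPDeriv_axialAnsatz (hA : HasRadialPartials A Ar Ay) (hB : HasRadialPartials B Br By)
    {z : EuclideanSpace ℝ (Fin (p + q))} (hz : xpart p q z ≠ 0)
    (v : EuclideanSpace ℝ (Fin (p + q))) :
    HasPDeriv (axialAnsatz A B) z v
      (ansatzDeriv (xpart p q z) (B ‖xpart p q z‖ (ypart p q z))
        (Ar ‖xpart p q z‖ (ypart p q z)) (Br ‖xpart p q z‖ (ypart p q z))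
        (Ay ‖xpart p q z‖ (ypart p q z)) (By ‖xpart p q z‖ (ypart p q z)) v) := by
  set x := xpart p q z
  set y := ypart p q z
  have hX : HasDerivAt (fun t : ℝ => x + t • xpart p q v) (xpart p q v) 0 := by
    simpa using ((hasDerivAt_id (0 : ℝ)).smul_const (xpart p q v)).const_add x
  have hY : HasDerivAt (fun t : ℝ => y + t • ypart p q v) (ypart p q v) 0 := by
    simpa using ((hasDerivAt_id (0 : ℝ)).smul_const (ypart p q v)).const_add y
  have hρ := hX.norm (by simpa using hz)
  have hρ0 : 0 < ‖x + (0 : ℝ) • xpart p q v‖ := by simpa using hz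
  have hBt := hB.weakHasDerivAt hρ hρ0 hY
  have h := (hA.weakHasDerivAt hρ hρ0 hY).add <| WeakHasDerivAt.smul (hρ.inv hρ0.ne') <|
    (hBt.map (LinearMap.mulLeft ℝ (ι (embX p q x)))).add <|
      WeakHasDerivAt.smul (hasDerivAt_id 0)
        (hBt.map (LinearMap.mulLeft ℝ (ι (embX p q (xpart p q v)))))
  rw [hasPDeriv_iff_weakHasDerivAt]
  convert h using 1
  · ext t
    simp [axialAnsatz, x, y, xpart_add_smul, ypart_add_smul, embX_add_smul, add_mul]
  · simp only [ansatzDeriv, zero_smul, add_zero, id, one_smul, zero_add, Pi.inv_apply,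
      LinearMap.mulLeft_apply, mul_add, mul_sub, mul_smul_comm, Finset.mul_sum]
    module

section DiracSum

variable {x : EuclideanSpace ℝ (Fin p)} {b Ar Br : CliffordAlgebra Q}
  {Ay By : Fin q → CliffordAlgebra Q}

lemma ansatzDeriv_single_castAdd (i : Fin p) :
    ansatzDeriv x b Ar Br Ay By (EuclideanSpace.single (Fin.castAdd q i) 1) =
      x i • (‖x‖⁻¹ • Ar + ι (embX p q x) * ((‖x‖ ^ 2)⁻¹ • Br - (‖x‖ ^ 3)⁻¹ • b))
        + ι (EuclideanSpace.single (Fin.castAdd q i) 1) * (‖x‖⁻¹ • b) := by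
  simp [ansatzDeriv, embX_single, EuclideanSpace.inner_single_right]

lemma ansatzDeriv_single_natAdd (j : Fin q) :
    ansatzDeriv x b Ar Br Ay By (EuclideanSpace.single (Fin.natAdd p j) 1) =
      Ay j + ‖x‖⁻¹ • (ι (embX p q x) * By j) := by
  simp [ansatzDeriv]

lemma sum_ι_mul_ansatzDeriv (hQ : ∀ v, Q v = -‖v‖ ^ 2) (hx : x ≠ 0) :
    ∑ k, ι (EuclideanSpace.single k 1) * ansatzDeriv x b Ar Br Ay By (EuclideanSpace.single k 1)
      = (yDirac Ay - Br - (((p : ℝ) - 1) / ‖x‖) • b)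
        - ι (embX p q x) * (‖x‖⁻¹ • (yDirac By - Ar)) := by
  have hsq : ι (embX p q x) * ι (embX p q x) = algebraMap ℝ _ (-‖x‖ ^ 2) := by
    rw [CliffordAlgebra.ι_sq_scalar, hQ, norm_embX]
  have hx_sum : ∀ P R : CliffordAlgebra Q,
      ∑ i : Fin p, ι (EuclideanSpace.single (Fin.castAdd q i) 1)
        * (x i • P + ι (EuclideanSpace.single (Fin.castAdd q i) 1) * R)
      = ι (embX p q x) * P - (p : ℝ) • R := by
    intro P R
    simp only [mul_add, ← mul_assoc, CliffordAlgebra.ι_sq_scalar, hQ, PiLp.norm_single,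
      Finset.sum_add_distrib, embX_eq_sum, map_sum, Finset.sum_mul, mul_smul_comm, map_smul,
      smul_mul_assoc]
    simp [Algebra.smul_def, sub_eq_add_neg]
  have hy_sum : ∑ j : Fin q, ι (EuclideanSpace.single (Fin.natAdd p j) 1)
      * (Ay j + ‖x‖⁻¹ • (ι (embX p q x) * By j))
      = yDirac Ay - ‖x‖⁻¹ • (ι (embX p q x) * yDirac By) := by
    simp only [yDirac, mul_add, mul_smul_comm, Finset.mul_sum, Finset.smul_sum,
      Finset.sum_add_distrib, sub_eq_add_neg, ← Finset.sum_neg_distrib, ← smul_neg,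
      CliffordAlgebra.ι_mul_ι_mul_of_isOrtho _
        (QuadraticMap.isOrtho_of_inner_eq_zero hQ (inner_single_natAdd_embX _ x))]
  have hP : ι (embX p q x) * (‖x‖⁻¹ • Ar + ι (embX p q x) * ((‖x‖ ^ 2)⁻¹ • Br - (‖x‖ ^ 3)⁻¹ • b))
      = ‖x‖⁻¹ • (ι (embX p q x) * Ar) + ‖x‖⁻¹ • b - Br := by
    have hr : ‖x‖ ≠ 0 := norm_ne_zero_iff.mpr hx
    rw [mul_add, ← mul_assoc, hsq, ← Algebra.smul_def, mul_smul_comm]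
    match_scalars <;> field_simp
  rw [Fin.sum_univ_add]
  simp only [ansatzDeriv_single_castAdd, ansatzDeriv_single_natAdd]
  rw [hx_sum, hy_sum, hP]
  simp only [mul_sub, mul_smul_comm]
  module

end DiracSum

lemma yDirac_mem {F : Fin q → CliffordAlgebra Q} (hF : ∀ j, F j ∈ yAlg p q Q) :
    yDirac F ∈ yAlg p q Q :=
  Subalgebra.sum_mem _ fun j _ => mul_mem (Algebra.subset_adjoin ⟨j, rfl⟩) (hF j)

lemma diracDerivEq_axialAnsatz (hQ : ∀ v, Q v = -‖v‖ ^ 2) (hA : HasRadialPartials A Ar Ay)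
    (hB : HasRadialPartials B Br By) {z : EuclideanSpace ℝ (Fin (p + q))} (hz : xpart p q z ≠ 0) :
    DiracDerivEq (axialAnsatz A B) z
      ((yDirac (Ay ‖xpart p q z‖ (ypart p q z)) - Br ‖xpart p q z‖ (ypart p q z)
          - (((p : ℝ) - 1) / ‖xpart p q z‖) • B ‖xpart p q z‖ (ypart p q z))
        - ι (embX p q (xpart p q z)) * (‖xpart p q z‖⁻¹ •
          (yDirac (By ‖xpart p q z‖ (ypart p q z)) - Ar ‖xpart p q z‖ (ypart p q z)))) :=
  ⟨_, fun _ => hasPDeriv_axialAnsatz hA hB hz _, sum_ι_mul_ansatzDeriv hQ hz⟩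

lemma diracDerivEq_axialAnsatz_zero_iff (hQ : ∀ v, Q v = -‖v‖ ^ 2)
    (hA : HasRadialPartials A Ar Ay) (hB : HasRadialPartials B Br By)
    (hAmem : ∀ r, 0 < r → ∀ y, A r y ∈ yAlg p q Q) (hBmem : ∀ r, 0 < r → ∀ y, B r y ∈ yAlg p q Q)
    (z : EuclideanSpace ℝ (Fin (p + q))) (hz : xpart p q z ≠ 0) :
    DiracDerivEq (axialAnsatz A B) z 0 ↔
      yDirac (Ay ‖xpart p q z‖ (ypart p q z)) - Br ‖xpart p q z‖ (ypart p q z)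
          - (((p : ℝ) - 1) / ‖xpart p q z‖) • B ‖xpart p q z‖ (ypart p q z) = 0 ∧
        yDirac (By ‖xpart p q z‖ (ypart p q z)) - Ar ‖xpart p q z‖ (ypart p q z) = 0 := by
  have hr : 0 < ‖xpart p q z‖ := norm_pos_iff.mpr hz
  let S := (yAlg p q Q).toSubmodule
  rw [(diracDerivEq_axialAnsatz hQ hA hB hz).iff_eq,
    sub_ι_embX_mul_eq_zero_iff hQ hz
      (sub_mem (sub_mem (yDirac_mem fun j => hA.coord_mem S hAmem hr _ j)
        (hB.radial_mem S hBmem hr _)) (Subalgebra.smul_mem _ (hBmem _ hr _) _))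
      (Subalgebra.smul_mem _ (sub_mem (yDirac_mem fun j => hB.coord_mem S hBmem hr _ j)
        (hA.radial_mem S hAmem hr _)) _),
    smul_eq_zero_iff_right (inv_ne_zero hr.ne')]

end Ansatz

theorem stmt2_general (p q : ℕ) (hp : 1 ≤ p)
    (Q : QuadraticForm ℝ (EuclideanSpace ℝ (Fin (p + q))))
    (hQ : ∀ v, Q v = -‖v‖ ^ 2)
    -- `A`, `B` are functions of the radial variable `r` and of `y ∈ ℝ^q`
    (A B : ℝ → EuclideanSpace ℝ (Fin q) → CliffordAlgebra Q)
    -- `A`, `B` take values in the subalgebra generated by `ι(ε₁), …, ι(ε_q)`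
    (hA𝒜 : ∀ r, 0 < r → ∀ y, A r y ∈ Algebra.adjoin ℝ
      (Set.range fun j : Fin q =>
        CliffordAlgebra.ι Q (EuclideanSpace.single (Fin.natAdd p j) (1 : ℝ))))
    (hB𝒜 : ∀ r, 0 < r → ∀ y, B r y ∈ Algebra.adjoin ℝ
      (Set.range fun j : Fin q =>
        CliffordAlgebra.ι Q (EuclideanSpace.single (Fin.natAdd p j) (1 : ℝ))))
    -- `A`, `B` are differentiable on `(0,∞) × ℝ^q`
    (hAdiff : ∀ ℓ : CliffordAlgebra Q →ₗ[ℝ] ℝ, DifferentiableOn ℝ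
      (fun w : ℝ × EuclideanSpace ℝ (Fin q) => ℓ (A w.1 w.2)) {w | 0 < w.1})
    (hBdiff : ∀ ℓ : CliffordAlgebra Q →ₗ[ℝ] ℝ, DifferentiableOn ℝ
      (fun w : ℝ × EuclideanSpace ℝ (Fin q) => ℓ (B w.1 w.2)) {w | 0 < w.1})
    -- the partial derivatives of `A` and `B`: radial ones …
    (Ar Br : ℝ → EuclideanSpace ℝ (Fin q) → CliffordAlgebra Q)
    (hAr : ∀ r, 0 < r → ∀ y, HasPDeriv
      (fun w : ℝ × EuclideanSpace ℝ (Fin q) => A w.1 w.2) (r, y) (1, 0) (Ar r y))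
    (hBr : ∀ r, 0 < r → ∀ y, HasPDeriv
      (fun w : ℝ × EuclideanSpace ℝ (Fin q) => B w.1 w.2) (r, y) (1, 0) (Br r y))
    -- … and the ones in the `y`-coordinate directions
    (Ay By : ℝ → EuclideanSpace ℝ (Fin q) → Fin q → CliffordAlgebra Q)
    (hAy : ∀ r, 0 < r → ∀ y j, HasPDeriv
      (fun w : ℝ × EuclideanSpace ℝ (Fin q) => A w.1 w.2) (r, y)
      (0, EuclideanSpace.single j 1) (Ay r y j))
    (hBy : ∀ r, 0 < r → ∀ y j, HasPDeriv
      (fun w : ℝ × EuclideanSpace ℝ (Fin q) => B w.1 w.2) (r, y)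
      (0, EuclideanSpace.single j 1) (By r y j)) :
    -- `f` is monogenic on `{x ≠ 0}` …
    (∀ z : EuclideanSpace ℝ (Fin (p + q)), xpart p q z ≠ 0 →
      DiracDerivEq (fun z' => A ‖xpart p q z'‖ (ypart p q z') +
        ‖xpart p q z'‖⁻¹ • (CliffordAlgebra.ι Q (embX p q (xpart p q z')) *
          B ‖xpart p q z'‖ (ypart p q z'))) z 0)
    -- … iff the Vekua-type system holds
    ↔ (∀ r, 0 < r → ∀ y,
        (∑ j, CliffordAlgebra.ι Q (EuclideanSpace.single (Fin.natAdd p j) (1 : ℝ)) * Ay r y j)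
          - Br r y - (((p : ℝ) - 1) / r) • B r y = 0 ∧
        (∑ j, CliffordAlgebra.ι Q (EuclideanSpace.single (Fin.natAdd p j) (1 : ℝ)) * By r y j)
          - Ar r y = 0) := by
  have key := diracDerivEq_axialAnsatz_zero_iff hQ ⟨hAdiff, hAr, hAy⟩ ⟨hBdiff, hBr, hBy⟩ hA𝒜 hB𝒜
  refine ⟨fun h r hr y => ?_, fun h z hz => (key _ hz).mpr (h _ (norm_pos_iff.mpr hz) _)⟩
  let x : EuclideanSpace ℝ (Fin p) := EuclideanSpace.single ⟨0, hp⟩ r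
  have hx : ‖x‖ = r := by simp [x, hr.le]
  have hz : xpart p q (embX p q x + embY p q y) ≠ 0 := by
    simpa using norm_ne_zero_iff.mp (hx ▸ hr.ne')
  simpa [hx, yDirac] using (key _ hz).mp (h _ hz)

theorem stmt2 (p q : ℕ) (hp : 1 ≤ p) (hq : 1 ≤ q)
    (Q : QuadraticForm ℝ (EuclideanSpace ℝ (Fin (p + q))))
    (hQ : ∀ v, Q v = -‖v‖ ^ 2)
    -- `A`, `B` are functions of the radial variable `r` and of `y ∈ ℝ^q`
    (A B : ℝ → EuclideanSpace ℝ (Fin q) → CliffordAlgebra Q)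
    -- `A`, `B` take values in the subalgebra generated by `ι(ε₁), …, ι(ε_q)`
    (hA𝒜 : ∀ r, 0 < r → ∀ y, A r y ∈ Algebra.adjoin ℝ
      (Set.range fun j : Fin q =>
        CliffordAlgebra.ι Q (EuclideanSpace.single (Fin.natAdd p j) (1 : ℝ))))
    (hB𝒜 : ∀ r, 0 < r → ∀ y, B r y ∈ Algebra.adjoin ℝ
      (Set.range fun j : Fin q =>
        CliffordAlgebra.ι Q (EuclideanSpace.single (Fin.natAdd p j) (1 : ℝ))))
    -- `A`, `B` are differentiable on `(0,∞) × ℝ^q`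
    (hAdiff : ∀ ℓ : CliffordAlgebra Q →ₗ[ℝ] ℝ, DifferentiableOn ℝ
      (fun w : ℝ × EuclideanSpace ℝ (Fin q) => ℓ (A w.1 w.2)) {w | 0 < w.1})
    (hBdiff : ∀ ℓ : CliffordAlgebra Q →ₗ[ℝ] ℝ, DifferentiableOn ℝ
      (fun w : ℝ × EuclideanSpace ℝ (Fin q) => ℓ (B w.1 w.2)) {w | 0 < w.1})
    -- the partial derivatives of `A` and `B`: radial ones …
    (Ar Br : ℝ → EuclideanSpace ℝ (Fin q) → CliffordAlgebra Q)
    (hAr : ∀ r, 0 < r → ∀ y, HasPDeriv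
      (fun w : ℝ × EuclideanSpace ℝ (Fin q) => A w.1 w.2) (r, y) (1, 0) (Ar r y))
    (hBr : ∀ r, 0 < r → ∀ y, HasPDeriv
      (fun w : ℝ × EuclideanSpace ℝ (Fin q) => B w.1 w.2) (r, y) (1, 0) (Br r y))
    -- … and the ones in the `y`-coordinate directions
    (Ay By : ℝ → EuclideanSpace ℝ (Fin q) → Fin q → CliffordAlgebra Q)
    (hAy : ∀ r, 0 < r → ∀ y j, HasPDeriv
      (fun w : ℝ × EuclideanSpace ℝ (Fin q) => A w.1 w.2) (r, y)
      (0, EuclideanSpace.single j 1) (Ay r y j))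
    (hBy : ∀ r, 0 < r → ∀ y j, HasPDeriv
      (fun w : ℝ × EuclideanSpace ℝ (Fin q) => B w.1 w.2) (r, y)
      (0, EuclideanSpace.single j 1) (By r y j)) :
    -- `f` is monogenic on `{x ≠ 0}` …
    (∀ z : EuclideanSpace ℝ (Fin (p + q)), xpart p q z ≠ 0 →
      DiracDerivEq (fun z' => A ‖xpart p q z'‖ (ypart p q z') +
        ‖xpart p q z'‖⁻¹ • (CliffordAlgebra.ι Q (embX p q (xpart p q z')) *
          B ‖xpart p q z'‖ (ypart p q z'))) z 0)
    -- … iff the Vekua-type system holds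
    ↔ (∀ r, 0 < r → ∀ y,
        (∑ j, CliffordAlgebra.ι Q (EuclideanSpace.single (Fin.natAdd p j) (1 : ℝ)) * Ay r y j)
          - Br r y - (((p : ℝ) - 1) / r) • B r y = 0 ∧
        (∑ j, CliffordAlgebra.ι Q (EuclideanSpace.single (Fin.natAdd p j) (1 : ℝ)) * By r y j)
          - Ar r y = 0) :=
  stmt2_general p q hp Q hQ A B hA𝒜 hB𝒜 hAdiff hBdiff Ar Br hAr hBr Ay By hAy hBy
end
end

section
/- Let a ∈ ℝ, b > 0, and z ∈ [0,1). Then Σ_{n=0}^∞ ((a)_n (b)_n / ((2b)_n · n!)) z^n = (Γ(2b) / (2^{2b-1} Γ(b)²)) · (1 - z/2)^{-a} · ∫_{-1}^{1} (1 - t²)^{b-1} (1 - (z/(2-z)) t)^{-a} dt. -/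
/-! Expanding `(1 - z u)^(-a)` by the binomial series and integrating term by term against the
Beta kernel `u^(b-1) (1-u)^(c-b-1)` gives Euler's integral representation of `₂F₁(a, b; c; z)`,
each moment being a Beta integral `B(b + n, c - b) = (b)ₙ/(c)ₙ · B(b, c - b)`. For `c = 2b` the
substitution `t = 2u - 1` turns the kernel into `4^(1-b) (1 - t²)^(b-1)`, and
`(1 - z/2)(1 - z/(2-z) · t) = 1 - z u`. -/

open MeasureTheory

lemma Ring.choose_add_sub_one_eq_ascPochhammer_div (a : ℝ) (n : ℕ) :
    Ring.choose (a + n - 1) n = (ascPochhammer ℝ n).eval a / n.factorial := by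
  rw [← Ring.multichoose_eq, eq_div_iff (by positivity), mul_comm, ← nsmul_eq_mul,
    Ring.factorial_nsmul_multichoose_eq_ascPochhammer, Polynomial.ascPochhammer_smeval_cast,
    Polynomial.ascPochhammer_smeval_eq_eval]

lemma Real.mem_eball_zero_one_iff {x : ℝ} : x ∈ Metric.eball 0 1 ↔ |x| < 1 := by
  rw [Metric.mem_eball, edist_zero_right, ← ofReal_norm, ENNReal.ofReal_lt_one, Real.norm_eq_abs]

theorem Real.one_sub_rpow_neg_hasFPowerSeriesOnBall_zero (a : ℝ) :
    HasFPowerSeriesOnBall (fun x ↦ (1 - x) ^ (-a))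
      (.ofScalars ℝ fun n ↦ (ascPochhammer ℝ n).eval a / n.factorial) 0 1 := by
  have h := Real.one_div_one_sub_rpow_hasFPowerSeriesOnBall_zero a
  simp only [Ring.choose_add_sub_one_eq_ascPochhammer_div] at h
  refine h.congr fun x hx => ?_
  have hx' : |x| < 1 := Real.mem_eball_zero_one_iff.mp hx
  simp only [one_div, Real.rpow_neg (by linarith [abs_lt.mp hx'] : 0 ≤ 1 - x)]

theorem Real.hasSum_ascPochhammer_div_factorial_mul_pow (a : ℝ) {x : ℝ} (hx : |x| < 1) :
    HasSum (fun n : ℕ => (ascPochhammer ℝ n).eval a / n.factorial * x ^ n)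
      ((1 - x) ^ (-a)) := by
  simpa [FormalMultilinearSeries.ofScalars_apply_eq, mul_comm] using
    (one_sub_rpow_neg_hasFPowerSeriesOnBall_zero a).hasSum (mem_eball_zero_one_iff.mpr hx)

theorem Real.summable_abs_ascPochhammer_div_factorial_mul_pow (a : ℝ) {x : ℝ} (hx : |x| < 1) :
    Summable (fun n : ℕ => |(ascPochhammer ℝ n).eval a| / n.factorial * |x| ^ n) := by
  have hr := (one_sub_rpow_neg_hasFPowerSeriesOnBall_zero a).r_le
  simpa [FormalMultilinearSeries.ofScalars_apply_eq, mul_comm] using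
    FormalMultilinearSeries.summable_norm_apply _ ((mem_eball_zero_one_iff.mpr hx).trans_le hr)

theorem Real.Gamma_add_nat_eq_ascPochhammer_mul {x : ℝ} (hx : 0 < x) (n : ℕ) :
    Gamma (x + n) = (ascPochhammer ℝ n).eval x * Gamma x := by
  induction n with
  | zero => simp
  | succ n ih =>
    rw [Nat.cast_succ, ← add_assoc, Gamma_add_one (by positivity), ih, ascPochhammer_succ_eval]
    ring

lemma Complex.ofReal_rpow_mul_one_sub_rpow {u : ℝ} (hu : u ∈ Set.Icc (0 : ℝ) 1) (p q : ℝ) :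
    ((u ^ (p - 1) * (1 - u) ^ (q - 1) : ℝ) : ℂ) =
      (u : ℂ) ^ ((p : ℂ) - 1) * (1 - (u : ℂ)) ^ ((q : ℂ) - 1) := by
  rw [ofReal_mul, ofReal_cpow hu.1, ofReal_cpow (sub_nonneg.mpr hu.2)]
  push_cast
  rfl

theorem intervalIntegrable_rpow_mul_one_sub_rpow {p q : ℝ} (hp : 0 < p) (hq : 0 < q) :
    IntervalIntegrable (fun u : ℝ => u ^ (p - 1) * (1 - u) ^ (q - 1)) volume 0 1 := by
  have hc := (Complex.betaIntegral_convergent (u := p) (v := q) (by simpa) (by simpa)).norm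
  refine (intervalIntegrable_congr fun u hu => ?_).mp hc
  rw [Set.uIoc_of_le zero_le_one] at hu
  have hu' : u ∈ Set.Icc (0 : ℝ) 1 := Set.Ioc_subset_Icc_self hu
  rw [← Complex.ofReal_rpow_mul_one_sub_rpow hu', Complex.norm_real, Real.norm_of_nonneg]
  exact mul_nonneg (Real.rpow_nonneg hu'.1 _) (Real.rpow_nonneg (sub_nonneg.mpr hu'.2) _)

theorem integral_rpow_mul_one_sub_rpow {p q : ℝ} (hp : 0 < p) (hq : 0 < q) :
    ∫ u in (0 : ℝ)..1, u ^ (p - 1) * (1 - u) ^ (q - 1) =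
      Real.Gamma p * Real.Gamma q / Real.Gamma (p + q) := by
  apply Complex.ofReal_injective
  rw [← intervalIntegral.integral_ofReal, Complex.ofReal_div, Complex.ofReal_mul,
    ← Complex.Gamma_ofReal, ← Complex.Gamma_ofReal, ← Complex.Gamma_ofReal,
    Complex.ofReal_add, ← Complex.betaIntegral_eq_Gamma_mul_div _ _ (by simpa) (by simpa)]
  refine intervalIntegral.integral_congr fun u hu => ?_
  rw [Set.uIcc_of_le zero_le_one] at hu
  exact Complex.ofReal_rpow_mul_one_sub_rpow hu p q

theorem integral_rpow_mul_one_sub_rpow_mul_pow {p q : ℝ} (hp : 0 < p) (hq : 0 < q) (n : ℕ) :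
    ∫ u in (0 : ℝ)..1, u ^ (p - 1) * (1 - u) ^ (q - 1) * u ^ n =
      Real.Gamma (p + n) * Real.Gamma q / Real.Gamma (p + n + q) := by
  rw [← integral_rpow_mul_one_sub_rpow (by positivity) hq]
  refine intervalIntegral.integral_congr_ae (Filter.Eventually.of_forall fun u hu => ?_)
  rw [Set.uIoc_of_le zero_le_one] at hu
  rw [add_sub_right_comm, Real.rpow_add hu.1, Real.rpow_natCast]
  ring

theorem hasSum_integral_mul_one_sub_mul_rpow_neg {w : ℝ → ℝ}
    (hw : IntervalIntegrable w volume 0 1) (a : ℝ) {z : ℝ} (hz : |z| < 1) :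
    HasSum (fun n : ℕ => (ascPochhammer ℝ n).eval a / n.factorial * z ^ n *
        ∫ u in (0 : ℝ)..1, w u * u ^ n)
      (∫ u in (0 : ℝ)..1, w u * (1 - z * u) ^ (-a)) := by
  have hzu : ∀ u ∈ Set.uIoc (0 : ℝ) 1, |z * u| < 1 := fun u hu => by
    rw [Set.uIoc_of_le zero_le_one] at hu
    rw [abs_mul, abs_of_pos hu.1]
    nlinarith [abs_nonneg z, hu.2]
  have key := intervalIntegral.hasSum_integral_of_dominated_convergence
    (μ := volume)
    (F := fun n u => w u * ((ascPochhammer ℝ n).eval a / n.factorial * (z * u) ^ n))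
    (f := fun u => w u * (1 - z * u) ^ (-a))
    (fun n u => |w u| * (|(ascPochhammer ℝ n).eval a| / n.factorial * |z| ^ n))
    (fun n => ?meas) (fun n => ?bound)
    (Filter.Eventually.of_forall fun u _ =>
      (Real.summable_abs_ascPochhammer_div_factorial_mul_pow a hz).mul_left |w u|)
    ?integrable
    (Filter.Eventually.of_forall fun u hu =>
      (Real.hasSum_ascPochhammer_div_factorial_mul_pow a (hzu u hu)).mul_left (w u))
  · have hterm : ∀ n : ℕ, ∫ u in (0 : ℝ)..1,
        w u * ((ascPochhammer ℝ n).eval a / n.factorial * (z * u) ^ n) =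
        (ascPochhammer ℝ n).eval a / n.factorial * z ^ n * ∫ u in (0 : ℝ)..1, w u * u ^ n :=
      fun n => by
        rw [← intervalIntegral.integral_const_mul]
        congr 1 with u
        ring
    simpa only [hterm] using key
  case meas =>
    exact (hw.mul_continuousOn (by fun_prop)).def'.aestronglyMeasurable
  case bound =>
    refine Filter.Eventually.of_forall fun u hu => ?_
    rw [Set.uIoc_of_le zero_le_one] at hu
    simp only [Real.norm_eq_abs, abs_mul, abs_div, abs_pow, Nat.abs_cast, mul_pow,
      abs_of_pos hu.1]
    gcongr
    exact mul_le_of_le_one_right (by positivity) (pow_le_one₀ hu.1.le hu.2)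
  case integrable =>
    simp only [tsum_mul_left]
    exact hw.abs.mul_const _

theorem tsum_ascPochhammer_mul_pow_eq_euler_integral {a b c z : ℝ} (hb : 0 < b) (hbc : b < c)
    (hz : |z| < 1) :
    ∑' n : ℕ, ((ascPochhammer ℝ n).eval a * (ascPochhammer ℝ n).eval b /
        ((ascPochhammer ℝ n).eval c * n.factorial)) * z ^ n
      = Real.Gamma c / (Real.Gamma b * Real.Gamma (c - b)) *
        ∫ u in (0 : ℝ)..1, u ^ (b - 1) * (1 - u) ^ (c - b - 1) * (1 - z * u) ^ (-a) := by
  have hcb : 0 < c - b := sub_pos.mpr hbc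
  have hGb := Real.Gamma_pos_of_pos hb
  have hGcb := Real.Gamma_pos_of_pos hcb
  have hGc := Real.Gamma_pos_of_pos (hb.trans hbc)
  have h := hasSum_integral_mul_one_sub_mul_rpow_neg
    (intervalIntegrable_rpow_mul_one_sub_rpow hb hcb) a hz
  have hterm : ∀ n : ℕ, ∫ u in (0 : ℝ)..1, u ^ (b - 1) * (1 - u) ^ (c - b - 1) * u ^ n =
      (ascPochhammer ℝ n).eval b / (ascPochhammer ℝ n).eval c *
        (Real.Gamma b * Real.Gamma (c - b) / Real.Gamma c) := fun n => by
    have hcn : (0 : ℝ) < (ascPochhammer ℝ n).eval c := ascPochhammer_pos n c (hb.trans hbc)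
    rw [integral_rpow_mul_one_sub_rpow_mul_pow hb hcb, show b + n + (c - b) = c + n by ring,
      Real.Gamma_add_nat_eq_ascPochhammer_mul hb,
      Real.Gamma_add_nat_eq_ascPochhammer_mul (hb.trans hbc)]
    field_simp
  simp only [hterm, ← mul_assoc] at h
  rw [← inv_div, ← div_eq_inv_mul, ← (h.div_const _).tsum_eq]
  refine tsum_congr fun n => ?_
  field_simp

theorem Real.two_rpow_two_mul_sub_one (b : ℝ) : (2 : ℝ) ^ (2 * b - 1) = 4 ^ (b - 1) * 2 := by
  rw [show 2 * b - 1 = 2 * (b - 1) + 1 by ring, Real.rpow_add_one two_ne_zero,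
    Real.rpow_mul zero_le_two]
  norm_num

theorem one_sub_div_two_rpow_mul_comp_two_mul_sub_one {a b z u : ℝ} (hz : z ≤ 1)
    (hu : u ∈ Set.Icc (0 : ℝ) 1) :
    (1 - z / 2) ^ (-a) * ((1 - (2 * u - 1) ^ 2) ^ (b - 1) *
        (1 - z / (2 - z) * (2 * u - 1)) ^ (-a)) =
      4 ^ (b - 1) * (u ^ (b - 1) * (1 - u) ^ (b - 1) * (1 - z * u) ^ (-a)) := by
  obtain ⟨hu0, hu1⟩ := hu
  have h2z : 0 < 2 - z := by linarith
  have hsq : 1 - (2 * u - 1) ^ 2 = 4 * (u * (1 - u)) := by ring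
  have hlin : 1 - z / (2 - z) * (2 * u - 1) = 2 * (1 - z * u) / (2 - z) := by
    field_simp
    ring
  have hpow : (1 - z / 2) ^ (-a) * (2 * (1 - z * u) / (2 - z)) ^ (-a) = (1 - z * u) ^ (-a) := by
    have hzu : 0 ≤ 1 - z * u := by nlinarith
    rw [← Real.mul_rpow (by linarith) (by positivity)]
    congr 1
    field_simp
  rw [hsq, hlin, Real.mul_rpow zero_le_four (mul_nonneg hu0 (by linarith)),
    Real.mul_rpow hu0 (by linarith)]
  linear_combination 4 ^ (b - 1) * u ^ (b - 1) * (1 - u) ^ (b - 1) * hpow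

theorem one_sub_div_two_rpow_mul_integral_eq {a b z : ℝ} (hz : z ≤ 1) :
    (1 - z / 2) ^ (-a) *
        ∫ t in (-1 : ℝ)..1, (1 - t ^ 2) ^ (b - 1) * (1 - (z / (2 - z)) * t) ^ (-a)
      = 2 ^ (2 * b - 1) *
        ∫ u in (0 : ℝ)..1, u ^ (b - 1) * (1 - u) ^ (b - 1) * (1 - z * u) ^ (-a) := by
  have hsub := intervalIntegral.integral_comp_mul_sub (a := 0) (b := 1)
    (fun t => (1 - t ^ 2) ^ (b - 1) * (1 - (z / (2 - z)) * t) ^ (-a)) two_ne_zero 1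
  norm_num at hsub
  calc _ = 2 * ∫ u in (0 : ℝ)..1, (1 - z / 2) ^ (-a) * ((1 - (2 * u - 1) ^ 2) ^ (b - 1) *
        (1 - z / (2 - z) * (2 * u - 1)) ^ (-a)) := by
        rw [intervalIntegral.integral_const_mul, hsub]
        ring
    _ = 2 * ∫ u in (0 : ℝ)..1, 4 ^ (b - 1) *
        (u ^ (b - 1) * (1 - u) ^ (b - 1) * (1 - z * u) ^ (-a)) := by
        congr 1
        refine intervalIntegral.integral_congr fun u hu => ?_
        rw [Set.uIcc_of_le zero_le_one] at hu
        exact one_sub_div_two_rpow_mul_comp_two_mul_sub_one hz hu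
    _ = _ := by
        rw [intervalIntegral.integral_const_mul, Real.two_rpow_two_mul_sub_one]
        ring

theorem stmt4 (a b z : ℝ) (hb : 0 < b) (hz0 : 0 ≤ z) (hz1 : z < 1) :
    ∑' n : ℕ,
        ((ascPochhammer ℝ n).eval a * (ascPochhammer ℝ n).eval b /
          ((ascPochhammer ℝ n).eval (2 * b) * n.factorial)) * z ^ n
      = (Real.Gamma (2 * b) / (2 ^ (2 * b - 1) * Real.Gamma b ^ 2)) *
          (1 - z / 2) ^ (-a) *
          ∫ t in (-1 : ℝ)..1, (1 - t ^ 2) ^ (b - 1) * (1 - (z / (2 - z)) * t) ^ (-a) := by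
  have hz : |z| < 1 := abs_lt.mpr ⟨by linarith, hz1⟩
  rw [tsum_ascPochhammer_mul_pow_eq_euler_integral hb (by linarith : b < 2 * b) hz, mul_assoc,
    one_sub_div_two_rpow_mul_integral_eq hz1.le, show 2 * b - b = b by ring]
  have h2 : (0 : ℝ) < 2 ^ (2 * b - 1) := by positivity
  rw [← mul_assoc]
  congr 1
  field_simp
end

section
/- Let p ≥ 2 and j ∈ ℕ. For every x ∈ EuclideanSpace ℝ (Fin p), ∫_{S^{p-1}} ⟨x,t⟩^{2j} dσ(t) = 2π^{(p-1)/2} (Γ(j + 1/2) / Γ(j + p/2)) ‖x‖^{2j}. -/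
open MeasureTheory Metric Set Real
open scoped RealInnerProductSpace

/-! Compute the Gaussian moment `∫ ⟪x, t⟫ ^ (2j) * exp (-‖t‖²) dt` in two ways. In polar
coordinates the integrand, homogeneous of degree `2j`, factors as the spherical integral times
`∫₀^∞ r ^ (2j + p - 1) * exp (-r²) dr = Γ(j + p/2) / 2`. On the other hand, a reflection mapping
`‖x‖ • e₀` to `x` preserves Lebesgue measure and the Gaussian, and Fubini then splits the integral
into `∫ u ^ (2j) * exp (-u²) du = Γ(j + 1/2)` and `p - 1` factors `∫ exp (-u²) du = √π`. -/

theorem integral_Ioi_pow_mul_exp_neg_sq (n : ℕ) :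
    ∫ y in Ioi (0 : ℝ), y ^ n * exp (-y ^ 2) = Gamma ((n + 1) / 2) / 2 := by
  have hq : (-1 : ℝ) < n := neg_one_lt_zero.trans_le n.cast_nonneg
  rw [div_eq_mul_one_div, mul_comm, ← integral_rpow_mul_exp_neg_rpow two_pos hq]
  refine setIntegral_congr_fun measurableSet_Ioi fun y _ ↦ ?_
  norm_cast

theorem integral_pow_two_mul_mul_exp_neg_sq (j : ℕ) :
    ∫ x : ℝ, x ^ (2 * j) * exp (-x ^ 2) = Gamma (j + 1 / 2) := by
  have h := integral_comp_abs (f := fun y ↦ y ^ (2 * j) * exp (-y ^ 2))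
  simp only [(even_two_mul j).pow_abs, sq_abs] at h
  rw [h, integral_Ioi_pow_mul_exp_neg_sq]
  push_cast
  ring_nf

theorem MeasureTheory.Measure.integral_volumeIoiPow {F : Type*} [NormedAddCommGroup F]
    [NormedSpace ℝ F] (n : ℕ) (h : ℝ → F) :
    ∫ r, h r ∂Measure.volumeIoiPow n = ∫ y in Ioi (0 : ℝ), y ^ n • h y := by
  simp only [Measure.volumeIoiPow, ENNReal.ofReal]
  rw [integral_withDensity_eq_integral_smul
      ((measurable_subtype_coe.pow_const _).real_toNNReal),
    integral_subtype_comap measurableSet_Ioi fun y ↦ (y ^ n).toNNReal • h y]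
  refine setIntegral_congr_fun measurableSet_Ioi fun y hy ↦ ?_
  rw [NNReal.smul_def, Real.coe_toNNReal _ (pow_nonneg (le_of_lt hy) _)]

section Polar

variable {E : Type*} [NormedAddCommGroup E] [NormedSpace ℝ E] [FiniteDimensional ℝ E]
  [MeasurableSpace E] [BorelSpace E] [Nontrivial E] (μ : Measure E) [μ.IsAddHaarMeasure]

theorem integral_comp_inv_norm_smul_mul_comp_norm (f : E → ℝ) (h : ℝ → ℝ) :
    ∫ x, f (‖x‖⁻¹ • x) * h ‖x‖ ∂μ
      = (∫ s, f s ∂μ.toSphere) * ∫ y in Ioi (0 : ℝ), y ^ (Module.finrank ℝ E - 1) * h y := by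
  calc ∫ x, f (‖x‖⁻¹ • x) * h ‖x‖ ∂μ
      = ∫ x : ({0}ᶜ : Set E), f (‖(x : E)‖⁻¹ • x) * h ‖(x : E)‖ ∂μ.comap (↑) := by
        rw [integral_subtype_comap (measurableSet_singleton 0).compl
          fun x : E ↦ f (‖x‖⁻¹ • x) * h ‖x‖, restrict_compl_singleton]
    _ = ∫ z, f z.1 * h z.2 ∂μ.toSphere.prod (Measure.volumeIoiPow (Module.finrank ℝ E - 1)) :=
        by simpa only [homeomorphUnitSphereProd_apply_fst_coe,
          homeomorphUnitSphereProd_apply_snd_coe] using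
          (μ.measurePreserving_homeomorphUnitSphereProd).integral_comp
            (Homeomorph.measurableEmbedding _) fun z ↦ f z.1 * h z.2
    _ = _ := by
        rw [integral_prod_mul (fun s : sphere (0 : E) 1 ↦ f s) fun r : Ioi (0 : ℝ) ↦ h r,
          Measure.integral_volumeIoiPow]
        simp only [smul_eq_mul]

theorem integral_mul_exp_neg_norm_sq_of_homogeneous {f : E → ℝ} {k : ℕ}
    (hf : ∀ r : ℝ, 0 < r → ∀ x, f (r • x) = r ^ k * f x) :
    ∫ x, f x * exp (-‖x‖ ^ 2) ∂μ
      = (∫ s, f s ∂μ.toSphere) * (Gamma ((k + Module.finrank ℝ E) / 2) / 2) := by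
  have hradial : ∀ᵐ x ∂μ, f x * exp (-‖x‖ ^ 2) = f (‖x‖⁻¹ • x) * (‖x‖ ^ k * exp (-‖x‖ ^ 2)) := by
    filter_upwards [Measure.ae_ne μ 0] with x hx
    have hnx : 0 < ‖x‖ := norm_pos_iff.2 hx
    nth_rw 1 [← smul_inv_smul₀ hnx.ne' x]
    rw [hf _ hnx]
    ring
  have hd : 1 ≤ Module.finrank ℝ E := Module.finrank_pos
  rw [integral_congr_ae hradial,
    integral_comp_inv_norm_smul_mul_comp_norm μ f fun r ↦ r ^ k * exp (-r ^ 2)]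
  simp_rw [← mul_assoc, ← pow_add]
  rw [integral_Ioi_pow_mul_exp_neg_sq]
  push_cast [Nat.cast_sub hd]
  ring_nf

end Polar

section Euclidean

variable {ι : Type*} [Fintype ι]

theorem EuclideanSpace.integral_apply_pow_two_mul_mul_exp_neg_norm_sq (i : ι) (j : ℕ) :
    ∫ t : EuclideanSpace ℝ ι, t i ^ (2 * j) * exp (-‖t‖ ^ 2)
      = Gamma (j + 1 / 2) * √π ^ (Fintype.card ι - 1) := by
  classical
  have hprod (y : ι → ℝ) : (WithLp.toLp 2 y) i ^ (2 * j) * exp (-‖WithLp.toLp 2 y‖ ^ 2)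
      = ∏ k, (if k = i then y k ^ (2 * j) else 1) * exp (-y k ^ 2) := by
    rw [PiLp.norm_sq_eq_of_L2, Finset.prod_mul_distrib, Finset.prod_ite_eq', ← exp_sum]
    simp [Real.norm_eq_abs, sq_abs]
  have hgauss : ∫ u : ℝ, exp (-u ^ 2) = √π := by simpa using integral_gaussian 1
  rw [← (PiLp.volume_preserving_toLp ι).integral_comp
      (MeasurableEquiv.toLp 2 (ι → ℝ)).measurableEmbedding]
  simp only [hprod]
  rw [integral_fintype_prod_volume_eq_prod
      fun k u ↦ (if k = i then u ^ (2 * j) else 1) * exp (-u ^ 2),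
    Fintype.prod_eq_mul_prod_compl i]
  have hrest : ∀ k ∈ ({i}ᶜ : Finset ι),
      ∫ u : ℝ, (if k = i then u ^ (2 * j) else 1) * exp (-u ^ 2) = √π := fun k hk ↦ by
    simp only [if_neg (show k ≠ i by simpa using hk), one_mul, hgauss]
  simp only [Finset.prod_congr rfl hrest, if_pos, integral_pow_two_mul_mul_exp_neg_sq]
  rw [Finset.prod_const, Finset.card_compl, Finset.card_singleton]

theorem EuclideanSpace.integral_inner_pow_two_mul_mul_exp_neg_norm_sq [Nonempty ι]
    (x : EuclideanSpace ℝ ι) (j : ℕ) :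
    ∫ t : EuclideanSpace ℝ ι, ⟪x, t⟫ ^ (2 * j) * exp (-‖t‖ ^ 2)
      = Gamma (j + 1 / 2) * √π ^ (Fintype.card ι - 1) * ‖x‖ ^ (2 * j) := by
  classical
  obtain ⟨i⟩ := ‹Nonempty ι›
  set e : EuclideanSpace ℝ ι := ‖x‖ • EuclideanSpace.single i 1
  have he : ‖e‖ = ‖x‖ := by simp [e, norm_smul]
  set R := Submodule.reflection (ℝ ∙ (e - x))ᗮ
  have hR : R e = x := Submodule.reflection_sub he
  have hrot (u : EuclideanSpace ℝ ι) : ⟪x, R u⟫ ^ (2 * j) * exp (-‖R u‖ ^ 2)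
      = ‖x‖ ^ (2 * j) * (u i ^ (2 * j) * exp (-‖u‖ ^ 2)) := by
    have hinner : ⟪x, R u⟫ = ‖x‖ * u i := by
      rw [← congrArg (⟪·, R u⟫) hR, LinearIsometryEquiv.inner_map_map, real_inner_smul_left,
        EuclideanSpace.inner_single_left, map_one, one_mul]
    rw [hinner, LinearIsometryEquiv.norm_map, mul_pow, mul_assoc]
  rw [← R.measurePreserving.integral_comp R.toHomeomorph.measurableEmbedding]
  simp only [hrot]
  rw [integral_const_mul, integral_apply_pow_two_mul_mul_exp_neg_norm_sq, mul_comm]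

end Euclidean

theorem stmt5 (p : ℕ) (hp : 2 ≤ p) (j : ℕ) (x : EuclideanSpace ℝ (Fin p)) :
    (∫ t : sphere (0 : EuclideanSpace ℝ (Fin p)) 1,
        ⟪x, (t : EuclideanSpace ℝ (Fin p))⟫ ^ (2 * j)
        ∂(volume : Measure (EuclideanSpace ℝ (Fin p))).toSphere)
      = 2 * Real.pi ^ (((p : ℝ) - 1) / 2) *
          (Real.Gamma ((j : ℝ) + 1 / 2) / Real.Gamma ((j : ℝ) + p / 2)) * ‖x‖ ^ (2 * j) := by
  have : NeZero p := ⟨by omega⟩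
  have hhom (r : ℝ) (_ : 0 < r) (t : EuclideanSpace ℝ (Fin p)) :
      ⟪x, r • t⟫ ^ (2 * j) = r ^ (2 * j) * ⟪x, t⟫ ^ (2 * j) := by
    rw [real_inner_smul_right, mul_pow]
  have hmoment := integral_mul_exp_neg_norm_sq_of_homogeneous volume (f := (⟪x, ·⟫ ^ (2 * j))) hhom
  rw [EuclideanSpace.integral_inner_pow_two_mul_mul_exp_neg_norm_sq, finrank_euclideanSpace_fin,
    Fintype.card_fin, ← rpow_natCast, Nat.cast_pred (by omega), ← rpow_div_two_eq_sqrt _ pi_pos.le,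
    show ((2 * j : ℕ) + (p : ℝ)) / 2 = j + p / 2 by push_cast; ring] at hmoment
  have hΓ : Gamma (j + p / 2) ≠ 0 := (Gamma_pos_of_pos (by positivity)).ne'
  rw [eq_div_of_mul_eq (div_ne_zero hΓ two_ne_zero) hmoment.symm]
  ring
end

section
/- Let p ≥ 1 be a natural number. Set β_j = -j for j even and β_j = -(j + p - 1) for j odd, and define real sequences (c_j), (d_j) by c_0 = 1, d_0 = 0, c_{j+1} = (-1)^j d_j / β_{j+1}, d_{j+1} = -(-1)^j c_j / β_{j+1}. Then for every j ∈ ℕ: c_{2j} = Γ(p/2) / (4^j · j! · Γ(j + p/2)), c_{2j+1} = 0, d_{2j} = 0, and d_{2j+1} = Γ(p/2) / (2 · 4^j · j! · Γ(j + 1 + p/2)). -/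
/-!
Since `d₀ = 0`, the recursion, which couples `c_{j+1}` to `d_j` and `d_{j+1}` to `c_j`, keeps
`c_{odd}` and `d_{even}` at zero, while along the surviving chain
`c_{2j} ↦ d_{2j+1} = c_{2j} / (2j + p) ↦ c_{2j+2} = d_{2j+1} / (2j + 2)`.
With `s = p / 2` these are exactly the ratios of consecutive terms of
`Γ(s) / (4^j j! Γ(j + s))`, by `Γ(j + 1 + s) = (j + s) Γ(j + s)`.
-/

noncomputable section

variable (p : ℕ) in
/-- `β_j = -j` for `j` even and `β_j = -(j + p - 1)` for `j` odd. -/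
def βcoef (j : ℕ) : ℝ := if Even j then -(j : ℝ) else -((j : ℝ) + p - 1)

open Real Nat

lemma βcoef_two_mul_add_one (p j : ℕ) : βcoef p (2 * j + 1) = -(2 * j + p) := by
  simp only [βcoef, Nat.not_even_two_mul_add_one, if_false]
  push_cast
  ring

lemma βcoef_two_mul_add_two (p j : ℕ) : βcoef p (2 * j + 2) = -(2 * j + 2) := by
  have h : Even (2 * j + 2) := ⟨j + 1, by ring⟩
  simp only [βcoef, h, if_true]
  push_cast
  ring

def evenCoeff (s : ℝ) (j : ℕ) : ℝ := Gamma s / (4 ^ j * j ! * Gamma (j + s))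

def oddCoeff (s : ℝ) (j : ℕ) : ℝ := Gamma s / (2 * 4 ^ j * j ! * Gamma (j + 1 + s))

lemma evenCoeff_zero {s : ℝ} (hs : 0 < s) : evenCoeff s 0 = 1 := by
  simp [evenCoeff, (Gamma_pos_of_pos hs).ne']

lemma oddCoeff_eq_evenCoeff_div {s : ℝ} (hs : 0 < s) (j : ℕ) :
    oddCoeff s j = evenCoeff s j / (2 * j + 2 * s) := by
  have hΓ : Gamma (j + 1 + s) = (j + s) * Gamma (j + s) := by
    rw [add_right_comm, Gamma_add_one (by positivity)]
  rw [oddCoeff, evenCoeff, hΓ, div_div]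
  ring

lemma evenCoeff_succ (s : ℝ) (j : ℕ) : evenCoeff s (j + 1) = oddCoeff s j / (2 * j + 2) := by
  rw [evenCoeff, oddCoeff, div_div, pow_succ, factorial_succ]
  push_cast
  ring

section Recursion

variable {p : ℕ} {c d : ℕ → ℝ}

lemma c_two_mul_add_one (hc : ∀ j, c (j + 1) = (-1 : ℝ) ^ j * d j / βcoef p (j + 1)) (j : ℕ) :
    c (2 * j + 1) = -d (2 * j) / (2 * j + p) := by
  rw [hc, βcoef_two_mul_add_one, (even_two_mul j).neg_one_pow, one_mul, div_neg, neg_div]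

lemma d_two_mul_add_one (hd : ∀ j, d (j + 1) = -((-1 : ℝ) ^ j * c j) / βcoef p (j + 1))
    (j : ℕ) : d (2 * j + 1) = c (2 * j) / (2 * j + p) := by
  rw [hd, βcoef_two_mul_add_one, (even_two_mul j).neg_one_pow, one_mul, neg_div_neg_eq]

lemma c_two_mul_add_two (hc : ∀ j, c (j + 1) = (-1 : ℝ) ^ j * d j / βcoef p (j + 1)) (j : ℕ) :
    c (2 * j + 2) = d (2 * j + 1) / (2 * j + 2) := by
  rw [hc, βcoef_two_mul_add_two, (odd_two_mul_add_one j).neg_one_pow, neg_one_mul,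
    neg_div_neg_eq]

lemma d_two_mul_add_two (hd : ∀ j, d (j + 1) = -((-1 : ℝ) ^ j * c j) / βcoef p (j + 1))
    (j : ℕ) : d (2 * j + 2) = -c (2 * j + 1) / (2 * j + 2) := by
  rw [hd, βcoef_two_mul_add_two, (odd_two_mul_add_one j).neg_one_pow, neg_one_mul, neg_neg,
    div_neg, neg_div]

lemma c_odd_eq_zero_and_d_even_eq_zero (hd0 : d 0 = 0)
    (hc : ∀ j, c (j + 1) = (-1 : ℝ) ^ j * d j / βcoef p (j + 1))
    (hd : ∀ j, d (j + 1) = -((-1 : ℝ) ^ j * c j) / βcoef p (j + 1)) (j : ℕ) :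
    c (2 * j + 1) = 0 ∧ d (2 * j) = 0 := by
  induction j with
  | zero => simp [c_two_mul_add_one hc 0, hd0]
  | succ j ih =>
    have hd' : d (2 * (j + 1)) = 0 := by rw [mul_add_one, d_two_mul_add_two hd, ih.1]; simp
    exact ⟨by rw [c_two_mul_add_one hc, hd']; simp, hd'⟩

lemma c_two_mul_eq_evenCoeff (hp : 1 ≤ p) (hc0 : c 0 = 1)
    (hc : ∀ j, c (j + 1) = (-1 : ℝ) ^ j * d j / βcoef p (j + 1))
    (hd : ∀ j, d (j + 1) = -((-1 : ℝ) ^ j * c j) / βcoef p (j + 1)) (j : ℕ) :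
    c (2 * j) = evenCoeff (p / 2) j := by
  have hs : (0 : ℝ) < p / 2 := by positivity
  induction j with
  | zero => rw [evenCoeff_zero hs, mul_zero, hc0]
  | succ j ih =>
    rw [mul_add_one, c_two_mul_add_two hc, d_two_mul_add_one hd, ih, evenCoeff_succ,
      oddCoeff_eq_evenCoeff_div hs]
    ring_nf

end Recursion

theorem stmt11 (p : ℕ) (hp : 1 ≤ p) (c d : ℕ → ℝ)
    (hc0 : c 0 = 1) (hd0 : d 0 = 0)
    (hc : ∀ j, c (j + 1) = (-1 : ℝ) ^ j * d j / βcoef p (j + 1))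
    (hd : ∀ j, d (j + 1) = -((-1 : ℝ) ^ j * c j) / βcoef p (j + 1)) :
    ∀ j : ℕ,
      c (2 * j) = Real.Gamma ((p : ℝ) / 2) /
          (4 ^ j * j.factorial * Real.Gamma ((j : ℝ) + p / 2)) ∧
      c (2 * j + 1) = 0 ∧
      d (2 * j) = 0 ∧
      d (2 * j + 1) = Real.Gamma ((p : ℝ) / 2) /
          (2 * 4 ^ j * j.factorial * Real.Gamma ((j : ℝ) + 1 + p / 2)) := by
  intro j
  have hs : (0 : ℝ) < p / 2 := by positivity
  have hc_even := c_two_mul_eq_evenCoeff hp hc0 hc hd j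
  obtain ⟨hc_odd, hd_even⟩ := c_odd_eq_zero_and_d_even_eq_zero hd0 hc hd j
  have hd_odd : d (2 * j + 1) = oddCoeff (p / 2) j := by
    rw [d_two_mul_add_one hd, hc_even, oddCoeff_eq_evenCoeff_div hs]
    ring_nf
  exact ⟨hc_even, hc_odd, hd_even, hd_odd⟩
end
end

section
/- Let p, q ≥ 1 and k ∈ ℕ, and let Cl^ℂ_{p+q} be the Clifford algebra of the quadratic form Q(z) = -(z_1² + ⋯ + z_{p+q}²) on the complex module Fin (p+q) → ℂ, with embedding ι. Let τ ∈ ℝ^p and σ ∈ ℝ^q be vectors with ‖τ‖ = ‖σ‖, regarded as complex vectors τ̃, σ̃ ∈ Fin (p+q) → ℂ supported in the first p and last q coordinates respectively. Then the function h : ℝ^{p+q} → Cl^ℂ_{p+q} defined by h(x,y) = (⟨x,τ⟩ + i⟨y,σ⟩)^k • (ι(τ̃) + i • ι(σ̃)) is monogenic: Σ_{j=1}^{p+q} ι(e_j) * (∂_{x_j} h)(a) = 0 for every a, where (e_j) is the standard basis (as complex vectors) and ∂_{x_j} are real partial derivatives. -/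
open MeasureTheory Metric
open scoped RealInnerProductSpace

noncomputable section

/-- The Dirac derivative of the complex-Clifford-algebra valued function `f` at `a` equals `D`:
the (real) partial derivatives of `f` at `a` in the standard coordinate directions exist and
`∑ⱼ ι(eⱼ) * ∂ⱼf(a) = D`. -/
def DiracDerivEqC {m : ℕ} {Q : QuadraticForm ℂ (Fin m → ℂ)}
    (f : EuclideanSpace ℝ (Fin m) → CliffordAlgebra Q)
    (a : EuclideanSpace ℝ (Fin m)) (D : CliffordAlgebra Q) : Prop :=
  ∃ d : Fin m → CliffordAlgebra Q,
    (∀ j, HasPDeriv f a (EuclideanSpace.single j 1) (d j)) ∧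
    ∑ j, CliffordAlgebra.ι Q (Pi.single j (1 : ℂ)) * d j = D

variable (p q : ℕ) in
/-- A real vector of `ℝ^p` regarded as a complex vector of `ℂ^{p+q}` supported in the
first `p` coordinates. -/
def embXC (x : EuclideanSpace ℝ (Fin p)) : Fin (p + q) → ℂ :=
  Fin.addCases (fun i => (x i : ℂ)) fun _ => 0

variable (p q : ℕ) in
/-- A real vector of `ℝ^q` regarded as a complex vector of `ℂ^{p+q}` supported in the
last `q` coordinates. -/
def embYC (y : EuclideanSpace ℝ (Fin q)) : Fin (p + q) → ℂ :=
  Fin.addCases (fun _ => 0) fun i => (y i : ℂ)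

/-!
The scalar factor is `ℓ(z)ᵏ` for the real-linear functional `ℓ(z) = ∑ⱼ zⱼ rⱼ` with
`r = τ̃ + iσ̃`, so `∂ⱼ h = k ℓᵏ⁻¹ rⱼ ι(r)` and the Dirac derivative collapses to
`k ℓᵏ⁻¹ ι(r)² = k ℓᵏ⁻¹ Q(r)`. This vanishes because `Q(r) = ‖σ‖² - ‖τ‖²`: `r` is a null vector
exactly when `‖τ‖ = ‖σ‖`.
-/

section HasPDeriv

variable {E A : Type*} [NormedAddCommGroup E] [NormedSpace ℝ E]
  [AddCommGroup A] [Module ℂ A] [Module ℝ A] [IsScalarTower ℝ ℂ A]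

theorem hasPDeriv_smul_const {g : E → ℂ} {a v : E} {g' : ℂ}
    (hg : HasDerivAt (fun t : ℝ => g (a + t • v)) g' 0) (x : A) :
    HasPDeriv (fun z => g z • x) a v (g' • x) := by
  intro ℓ
  let φ : ℂ →L[ℝ] ℝ :=
    LinearMap.toContinuousLinearMap (ℓ ∘ₗ (LinearMap.toSpanSingleton ℂ A x).restrictScalars ℝ)
  exact φ.hasFDerivAt.comp_hasDerivAt (0 : ℝ) hg

theorem hasPDeriv_pow_smul_const (ℓ : E →L[ℝ] ℂ) (k : ℕ) (a v : E) (x : A) :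
    HasPDeriv (fun z => ℓ z ^ k • x) a v (((k : ℂ) * ℓ a ^ (k - 1) * ℓ v) • x) := by
  refine hasPDeriv_smul_const ?_ x
  have hline : HasDerivAt (fun t : ℝ => ℓ (a + t • v)) (ℓ v) 0 := by
    simpa using ((hasDerivAt_id (0 : ℝ)).smul_const (ℓ v)).const_add (ℓ a)
  simpa using hline.fun_pow k

end HasPDeriv

theorem CliffordAlgebra.sum_ι_single_mul_smul {R ι : Type*} [CommRing R] [Fintype ι]
    [DecidableEq ι] {Q : QuadraticForm R (ι → R)} (r : ι → R) (x : CliffordAlgebra Q) :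
    ∑ j, CliffordAlgebra.ι Q (Pi.single j 1) * (r j • x) = CliffordAlgebra.ι Q r * x := by
  conv_rhs => rw [pi_eq_sum_univ' r]
  simp [Finset.sum_mul]

def coordPairing {m : ℕ} (r : Fin m → ℂ) : EuclideanSpace ℝ (Fin m) →L[ℝ] ℂ :=
  ∑ j, r j • (Complex.ofRealCLM ∘L EuclideanSpace.proj j)

theorem coordPairing_apply {m : ℕ} (r : Fin m → ℂ) (z : EuclideanSpace ℝ (Fin m)) :
    coordPairing r z = ∑ j, (z j : ℂ) * r j := by
  simp [coordPairing, mul_comm]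

theorem coordPairing_single {m : ℕ} (r : Fin m → ℂ) (j : Fin m) :
    coordPairing r (EuclideanSpace.single j 1) = r j := by
  simp [coordPairing_apply, apply_ite ((↑) : ℝ → ℂ), ite_mul]

theorem diracDerivEqC_coordPairing_pow_smul_ι {m : ℕ} {Q : QuadraticForm ℂ (Fin m → ℂ)}
    (r : Fin m → ℂ) (hr : Q r = 0) (k : ℕ) (a : EuclideanSpace ℝ (Fin m)) :
    DiracDerivEqC (fun z => coordPairing r z ^ k • CliffordAlgebra.ι Q r) a 0 := by
  set c : ℂ := (k : ℂ) * coordPairing r a ^ (k - 1)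
  refine ⟨fun j => r j • c • CliffordAlgebra.ι Q r, fun j => ?_, ?_⟩
  · have h := hasPDeriv_pow_smul_const (coordPairing r) k a (EuclideanSpace.single j 1)
      (CliffordAlgebra.ι Q r)
    rwa [coordPairing_single, mul_comm _ (r j), mul_smul] at h
  · rw [CliffordAlgebra.sum_ι_single_mul_smul, mul_smul_comm, CliffordAlgebra.ι_sq_scalar, hr,
      map_zero, smul_zero]

theorem coordPairing_embXC_add_I_smul_embYC {p q : ℕ} (τ : EuclideanSpace ℝ (Fin p))
    (σ : EuclideanSpace ℝ (Fin q)) (z : EuclideanSpace ℝ (Fin (p + q))) :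
    coordPairing (embXC p q τ + Complex.I • embYC p q σ) z =
      ((⟪xpart p q z, τ⟫ : ℝ) : ℂ) + Complex.I * ((⟪ypart p q z, σ⟫ : ℝ) : ℂ) := by
  simp [coordPairing_apply, Fin.sum_univ_add, embXC, embYC, xpart, ypart, PiLp.inner_apply,
    Finset.mul_sum, mul_comm, mul_assoc]

theorem sum_sq_embXC_add_I_smul_embYC {p q : ℕ} (τ : EuclideanSpace ℝ (Fin p))
    (σ : EuclideanSpace ℝ (Fin q)) :
    ∑ i, (embXC p q τ + Complex.I • embYC p q σ) i ^ 2 = ((‖τ‖ ^ 2 - ‖σ‖ ^ 2 : ℝ) : ℂ) := by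
  simp [Fin.sum_univ_add, embXC, embYC, EuclideanSpace.norm_sq_eq, mul_pow, sub_eq_add_neg]

theorem stmt13_general (p q : ℕ) (k : ℕ)
    (Q : QuadraticForm ℂ (Fin (p + q) → ℂ))
    (hQ : ∀ z, Q z = -∑ i, z i ^ 2)
    (τ : EuclideanSpace ℝ (Fin p)) (σ : EuclideanSpace ℝ (Fin q)) (hτσ : ‖τ‖ = ‖σ‖) :
    ∀ a, DiracDerivEqC (fun z =>
      (((⟪xpart p q z, τ⟫ : ℝ) : ℂ) + Complex.I * ((⟪ypart p q z, σ⟫ : ℝ) : ℂ)) ^ k •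
        (CliffordAlgebra.ι Q (embXC p q τ) +
          Complex.I • CliffordAlgebra.ι Q (embYC p q σ))) a 0 := by
  intro a
  set r := embXC p q τ + Complex.I • embYC p q σ
  have hnull : Q r = 0 := by
    rw [hQ, sum_sq_embXC_add_I_smul_embYC, hτσ, sub_self, Complex.ofReal_zero, neg_zero]
  simpa only [coordPairing_embXC_add_I_smul_embYC, r, map_add, map_smul] using
    diracDerivEqC_coordPairing_pow_smul_ι r hnull k a

theorem stmt13 (p q : ℕ) (hp : 1 ≤ p) (hq : 1 ≤ q) (k : ℕ)
    (Q : QuadraticForm ℂ (Fin (p + q) → ℂ))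
    (hQ : ∀ z, Q z = -∑ i, z i ^ 2)
    (τ : EuclideanSpace ℝ (Fin p)) (σ : EuclideanSpace ℝ (Fin q)) (hτσ : ‖τ‖ = ‖σ‖) :
    ∀ a, DiracDerivEqC (fun z =>
      (((⟪xpart p q z, τ⟫ : ℝ) : ℂ) + Complex.I * ((⟪ypart p q z, σ⟫ : ℝ) : ℂ)) ^ k •
        (CliffordAlgebra.ι Q (embXC p q τ) +
          Complex.I • CliffordAlgebra.ι Q (embYC p q σ))) a 0 :=
  stmt13_general p q k Q hQ τ σ hτσ
end
end
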